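/- arXiv:1401.2168 — 8 statements merged into one kernel-verified Lean document; each statement's English description precedes it below -/
import Mathlib

section
/- Generalized Fatou lemma for setwise convergence: Let S be a metric space, let {μ⁽ⁿ⁾} be a sequence of Borel probability measures on S converging setwise to a Borel probability measure μ, and let {f⁽ⁿ⁾} be a sequence of Borel-measurable functions from S to [0,+∞]. Then ∫_S liminf_{n→∞} f⁽ⁿ⁾(s) μ(ds) ≤ liminf_{n→∞} ∫_S f⁽ⁿ⁾(s) μ⁽ⁿ⁾(ds). -/
open MeasureTheory Filter Topology
open scoped ENNReal NNReal

lemma simpleFunc_lintegral_tendsto {S : Type*} [MeasurableSpace S]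
    (μ : ℕ → Measure S) (ν : Measure S)
    (hset : ∀ B : Set S, MeasurableSet B → Tendsto (fun n => μ n B) atTop (𝓝 (ν B)))
    (ψ : SimpleFunc S ℝ≥0∞) (hψ : ∀ s, ψ s ≠ ∞) :
    Tendsto (fun n => ψ.lintegral (μ n)) atTop (𝓝 (ψ.lintegral ν)) := by
  simp only [SimpleFunc.lintegral]
  refine tendsto_finset_sum _ fun y hy => ?_
  obtain ⟨s, hs⟩ := SimpleFunc.mem_range.mp hy
  exact ENNReal.Tendsto.const_mul (hset _ (ψ.measurableSet_fiber y))
    (Or.inr (hs ▸ hψ s))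

lemma lintegral_le_liminf_setwise {S : Type*} [MeasurableSpace S]
    (μ : ℕ → Measure S) (ν : Measure S)
    (hset : ∀ B : Set S, MeasurableSet B → Tendsto (fun n => μ n B) atTop (𝓝 (ν B)))
    (g : S → ℝ≥0∞) :
    ∫⁻ s, g s ∂ν ≤ liminf (fun n => ∫⁻ s, g s ∂(μ n)) atTop := by
  rw [lintegral_eq_nnreal]
  refine iSup₂_le fun φ hφ => ?_
  have ht := simpleFunc_lintegral_tendsto μ ν hset (φ.map ((↑) : ℝ≥0 → ℝ≥0∞))
    (fun s => by simp [SimpleFunc.map_apply])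
  rw [← ht.liminf_eq]
  refine liminf_le_liminf (Eventually.of_forall fun n => ?_)
  rw [← SimpleFunc.lintegral_eq_lintegral]
  exact lintegral_mono fun s => by simpa [SimpleFunc.map_apply] using hφ s

/-- **Generalized Fatou lemma for setwise convergence.**
If Borel probability measures `μ n` on a metric space `S` converge setwise to `ν`
(i.e. `μ n B → ν B` for every Borel set `B`) and `f n : S → [0,∞]` are Borel measurable, then
`∫ liminf f n dν ≤ liminf ∫ f n dμ n`. -/
theorem generalized_fatou_setwise {S : Type*} [MetricSpace S] [MeasurableSpace S] [BorelSpace S]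
    (μ : ℕ → ProbabilityMeasure S) (ν : ProbabilityMeasure S)
    (hset : ∀ B : Set S, MeasurableSet B →
      Tendsto (fun n => (μ n : Measure S) B) atTop (𝓝 ((ν : Measure S) B)))
    (f : ℕ → S → ℝ≥0∞) (hf : ∀ n, Measurable (f n)) :
    ∫⁻ s, liminf (fun n => f n s) atTop ∂(ν : Measure S) ≤
      liminf (fun n => ∫⁻ s, f n s ∂(μ n : Measure S)) atTop := by
  set g : ℕ → S → ℝ≥0∞ := fun k s => ⨅ i ≥ k, f i s with hg
  have hgmeas : ∀ k, Measurable (g k) := fun k =>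
    Measurable.iInf fun i => Measurable.iInf fun _ => hf i
  have hgmono : Monotone g := fun k l hkl s =>
    iInf_le_iInf_of_subset fun i (hi : l ≤ i) => hkl.trans hi
  have h1 : ∫⁻ s, liminf (fun n => f n s) atTop ∂(ν : Measure S)
      = ⨆ k, ∫⁻ s, g k s ∂(ν : Measure S) := by
    simp_rw [liminf_eq_iSup_iInf_of_nat]
    exact lintegral_iSup hgmeas hgmono
  rw [h1]
  refine iSup_le fun k => ?_
  refine (lintegral_le_liminf_setwise _ _ hset (g k)).trans ?_
  refine liminf_le_liminf ?_
  filter_upwards [eventually_ge_atTop k] with n hn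
  exact lintegral_mono fun s => biInf_le (fun i => f i s) hn
end

section
/- Generalized Fatou lemma for weak convergence: Let S be a metric space, let {μ⁽ⁿ⁾} be a sequence of Borel probability measures on S converging weakly to a Borel probability measure μ, and let {f⁽ⁿ⁾} be a sequence of Borel-measurable functions from S to [0,+∞]. Define g(s) = liminf_{n→∞, s′→s} f⁽ⁿ⁾(s′), i.e. g(s) = sup_{δ>0, N∈ℕ} inf { f⁽ⁿ⁾(s′) : n ≥ N, dist(s′,s) < δ }. Then ∫_S g(s) μ(ds) ≤ liminf_{n→∞} ∫_S f⁽ⁿ⁾(s) μ⁽ⁿ⁾(ds). -/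
open MeasureTheory Filter Topology Set
open scoped ENNReal

section Aux
variable {S : Type*} [MeasurableSpace S] [TopologicalSpace S] [OpensMeasurableSpace S]

lemma gfw_aux_real {ν : Measure S} {μs : ℕ → Measure S}
    (h_opens : ∀ G, IsOpen G → ν G ≤ atTop.liminf fun i => μs i G)
    {g : S → ℝ} (hg : ∀ t : ℝ, IsOpen {x | t < g x}) (g_nn : ∀ x, 0 ≤ g x) :
    ∫⁻ x, ENNReal.ofReal (g x) ∂ν ≤ atTop.liminf fun i => ∫⁻ x, ENNReal.ofReal (g x) ∂(μs i) := by
  have g_mble : Measurable g := measurable_of_Ioi fun t => (hg t).measurableSet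
  have key : ∀ m : Measure S, ∫⁻ x, ENNReal.ofReal (g x) ∂m
      = ∫⁻ t in Ioi (0:ℝ), m {a | t < g a} := fun m =>
    lintegral_eq_lintegral_meas_lt m (Eventually.of_forall g_nn) g_mble.aemeasurable
  rw [key]
  calc ∫⁻ t in Ioi (0:ℝ), ν {a | t < g a}
      ≤ ∫⁻ t in Ioi (0:ℝ), atTop.liminf fun i => μs i {a | t < g a} :=
        lintegral_mono fun t => h_opens _ (hg t)
    _ ≤ atTop.liminf fun i => ∫⁻ t in Ioi (0:ℝ), μs i {a | t < g a} :=
        lintegral_liminf_le fun n => Antitone.measurable fun s t hst =>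
          measure_mono fun ω hω => lt_of_le_of_lt hst hω
    _ = atTop.liminf fun i => ∫⁻ x, ENNReal.ofReal (g x) ∂(μs i) := by simp_rw [key]

lemma gfw_aux_ennreal {ν : Measure S} {μs : ℕ → Measure S}
    (h_opens : ∀ G, IsOpen G → ν G ≤ atTop.liminf fun i => μs i G)
    {e : S → ℝ≥0∞} (he : ∀ t : ℝ≥0∞, IsOpen {x | t < e x}) :
    ∫⁻ x, e x ∂ν ≤ atTop.liminf fun i => ∫⁻ x, e x ∂(μs i) := by
  have e_mble : Measurable e := measurable_of_Ioi fun t => (he t).measurableSet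
  have trunc : ∀ x, e x = ⨆ M : ℕ, e x ⊓ (M : ℝ≥0∞) := by
    intro x
    rw [← inf_iSup_eq, ENNReal.iSup_natCast, inf_top_eq]
  have step : ∀ M : ℕ, ∫⁻ x, e x ⊓ (M : ℝ≥0∞) ∂ν ≤ atTop.liminf fun i => ∫⁻ x, e x ∂(μs i) := by
    intro M
    have hne : ∀ x, e x ⊓ (M : ℝ≥0∞) ≠ ⊤ :=
      fun x => (inf_le_right.trans_lt (ENNReal.natCast_lt_top M)).ne
    set g : S → ℝ := fun x => (e x ⊓ (M : ℝ≥0∞)).toReal with hgdef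
    have hofReal : ∀ x, ENNReal.ofReal (g x) = e x ⊓ (M : ℝ≥0∞) :=
      fun x => ENNReal.ofReal_toReal (hne x)
    have hg : ∀ t : ℝ, IsOpen {x | t < g x} := by
      intro t
      rcases le_or_gt 0 t with ht | ht
      · have hset : {x | t < g x}
            = {x | ENNReal.ofReal t < e x} ∩ {x | ENNReal.ofReal t < (M : ℝ≥0∞)} := by
          ext x
          simp only [mem_setOf_eq, mem_inter_iff, hgdef]
          rw [← ENNReal.ofReal_lt_iff_lt_toReal ht (hne x), lt_inf_iff]
        rw [hset]
        refine (he _).inter ?_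
        by_cases hM : ENNReal.ofReal t < (M : ℝ≥0∞)
        · simpa [hM] using isOpen_univ
        · simpa [hM] using isOpen_empty
      · have hset : {x | t < g x} = univ :=
          eq_univ_of_forall fun x => lt_of_lt_of_le ht ENNReal.toReal_nonneg
        rw [hset]; exact isOpen_univ
    have g_nn : ∀ x, 0 ≤ g x := fun x => ENNReal.toReal_nonneg
    have := gfw_aux_real h_opens hg g_nn
    simp_rw [hofReal] at this
    refine this.trans (liminf_le_liminf ?_)
    exact Eventually.of_forall fun i => lintegral_mono fun x => inf_le_left
  calc ∫⁻ x, e x ∂ν = ∫⁻ x, ⨆ M : ℕ, e x ⊓ (M : ℝ≥0∞) ∂ν := lintegral_congr trunc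
    _ = ⨆ M : ℕ, ∫⁻ x, e x ⊓ (M : ℝ≥0∞) ∂ν :=
        lintegral_iSup (fun M => e_mble.inf measurable_const)
          (fun a b hab x => inf_le_inf le_rfl (by exact_mod_cast Nat.cast_le.mpr hab))
    _ ≤ atTop.liminf fun i => ∫⁻ x, e x ∂(μs i) := iSup_le step

end Aux

/-- **Generalized Fatou lemma for weak convergence.**
If Borel probability measures `μ n` on a metric space `S` converge weakly to `ν` and
`f n : S → [0,∞]` are Borel measurable, then with
`g s = liminf_{n→∞, s'→s} f n s' = sup_{δ>0, N} inf { f n s' : n ≥ N, dist s' s < δ }`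
one has `∫ g dν ≤ liminf ∫ f n dμ n`. -/
theorem generalized_fatou_weak {S : Type*} [MetricSpace S] [MeasurableSpace S] [BorelSpace S]
    (μ : ℕ → ProbabilityMeasure S) (ν : ProbabilityMeasure S)
    (hweak : Tendsto μ atTop (𝓝 ν))
    (f : ℕ → S → ℝ≥0∞) (hf : ∀ n, Measurable (f n)) :
    ∫⁻ s, (⨆ (δ : ℝ) (_ : 0 < δ) (N : ℕ),
        ⨅ (n : ℕ) (_ : N ≤ n) (s' : S) (_ : dist s' s < δ), f n s') ∂(ν : Measure S) ≤
      liminf (fun n => ∫⁻ s, f n s ∂(μ n : Measure S)) atTop := by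
  have h_opens : ∀ G, IsOpen G → (ν : Measure S) G ≤ atTop.liminf fun i => (μ i : Measure S) G :=
    fun G hG => ProbabilityMeasure.le_liminf_measure_open_of_tendsto hweak hG
  set h : ℕ → ℝ → S → ℝ≥0∞ :=
    fun N δ s => ⨅ (n : ℕ) (_ : N ≤ n) (s' : S) (_ : dist s' s < δ), f n s' with hhdef
  -- basic bound: h N δ s ≤ f n s' for admissible n, s'
  have hb : ∀ N δ (s : S) n (s' : S), N ≤ n → dist s' s < δ → h N δ s ≤ f n s' := by
    intro N δ s n s' hn hd
    exact iInf_le_of_le n (iInf_le_of_le hn (iInf_le_of_le s' (iInf_le _ hd)))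
  have hle : ∀ {N N' : ℕ} {δ δ' : ℝ}, N ≤ N' → δ' ≤ δ → ∀ s, h N δ s ≤ h N' δ' s := by
    intro N N' δ δ' hN hδ s
    refine le_iInf fun n => le_iInf fun hn => le_iInf fun s' => le_iInf fun hd => ?_
    exact hb N δ s n s' (hN.trans hn) (lt_of_lt_of_le hd hδ)
  -- h N δ is upper semicontinuous, hence measurable
  have husc : ∀ N δ (t : ℝ≥0∞), IsOpen {s | h N δ s < t} := by
    intro N δ t
    rw [Metric.isOpen_iff]
    intro s hs
    simp only [mem_setOf_eq, hhdef] at hs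
    rw [iInf_lt_iff] at hs
    obtain ⟨n, hs⟩ := hs
    rw [iInf_lt_iff] at hs
    obtain ⟨hn, hs⟩ := hs
    rw [iInf_lt_iff] at hs
    obtain ⟨s', hs⟩ := hs
    rw [iInf_lt_iff] at hs
    obtain ⟨hd, hs⟩ := hs
    refine ⟨δ - dist s' s, by linarith, fun y hy => ?_⟩
    rw [Metric.mem_ball] at hy
    have hdy : dist s' y < δ := by
      have h1 := dist_triangle s' s y
      have h2 : dist s y = dist y s := dist_comm s y
      linarith
    exact lt_of_le_of_lt (hb N δ y n s' hn hdy) hs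
  have hmble : ∀ N δ, Measurable (h N δ) :=
    fun N δ => measurable_of_Iio fun t => (husc N δ t).measurableSet
  -- the monotone sequence G m = h m (1/(m+1))
  set G : ℕ → S → ℝ≥0∞ := fun m s => h m (1 / (m + 1 : ℝ)) s with hGdef
  have Gmono : Monotone G := by
    intro a b hab s
    refine hle hab ?_ s
    apply one_div_le_one_div_of_le
    · positivity
    · have : (a:ℝ) ≤ b := Nat.cast_le.mpr hab
      linarith
  have hGsup : ∀ s, (⨆ (δ : ℝ) (_ : 0 < δ) (N : ℕ),
      ⨅ (n : ℕ) (_ : N ≤ n) (s' : S) (_ : dist s' s < δ), f n s') = ⨆ m, G m s := by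
    intro s
    apply le_antisymm
    · refine iSup_le fun δ => iSup_le fun hδ => iSup_le fun N => ?_
      set m := max N ⌈1 / δ⌉₊ with hm
      have h1 : 1 / (m + 1 : ℝ) ≤ δ := by
        rw [div_le_iff₀ (by positivity)]
        have h2 : (1 : ℝ) / δ ≤ m := by
          calc (1:ℝ)/δ ≤ ⌈1/δ⌉₊ := Nat.le_ceil _
            _ ≤ m := by exact_mod_cast Nat.cast_le.mpr (le_max_right _ _)
        calc (1:ℝ) = δ * (1/δ) := by field_simp
          _ ≤ δ * (m + 1) := by nlinarith
      exact le_trans (hle (le_max_left _ _) h1 s) (le_iSup (fun m => G m s) m)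
    · refine iSup_le fun m => le_iSup_of_le (1/(m+1:ℝ)) ?_
      have hpos : (0:ℝ) < 1 / (m + 1 : ℝ) := by positivity
      exact le_iSup_of_le hpos (le_iSup (fun N => h N (1/(m+1:ℝ)) s) m)
  calc ∫⁻ s, (⨆ (δ : ℝ) (_ : 0 < δ) (N : ℕ),
        ⨅ (n : ℕ) (_ : N ≤ n) (s' : S) (_ : dist s' s < δ), f n s') ∂(ν : Measure S)
      = ∫⁻ s, ⨆ m, G m s ∂(ν : Measure S) := lintegral_congr hGsup
    _ = ⨆ m, ∫⁻ s, G m s ∂(ν : Measure S) :=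
        lintegral_iSup (fun m => hmble _ _) fun a b hab s => Gmono hab s
    _ ≤ liminf (fun n => ∫⁻ s, f n s ∂(μ n : Measure S)) atTop := by
        refine iSup_le fun m => ?_
        -- lower semicontinuous envelope
        set δ : ℝ := 1 / (2 * (m + 1 : ℝ)) with hδdef
        have hδpos : 0 < δ := by positivity
        have hδδ : δ + δ = 1 / (m + 1 : ℝ) := by
          rw [hδdef]
          have hm1 : (m + 1 : ℝ) ≠ 0 := by positivity
          field_simp
          norm_num
        set e : S → ℝ≥0∞ :=
          fun x => ⨆ (ρ : ℝ) (_ : 0 < ρ), ⨅ (s : S) (_ : dist s x < ρ), h m δ s with hedef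
        have he_lsc : ∀ t : ℝ≥0∞, IsOpen {x | t < e x} := by
          intro t
          rw [Metric.isOpen_iff]
          intro x hx
          simp only [mem_setOf_eq, hedef, lt_iSup_iff] at hx
          obtain ⟨ρ, hρ, hx⟩ := hx
          refine ⟨ρ/2, by linarith, fun y hy => ?_⟩
          rw [Metric.mem_ball] at hy
          simp only [mem_setOf_eq, hedef, lt_iSup_iff]
          refine ⟨ρ/2, by linarith, lt_of_lt_of_le hx ?_⟩
          refine le_iInf fun s => le_iInf fun hd => ?_
          have : dist s x < ρ := by
            have := dist_triangle s y x
            linarith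
          exact iInf_le_of_le s (iInf_le _ this)
        have hGe : ∀ x, G m x ≤ e x := by
          intro x
          have key : G m x ≤ ⨅ (s : S) (_ : dist s x < δ), h m δ s := by
            refine le_iInf fun s => le_iInf fun hd => ?_
            refine le_iInf fun n => le_iInf fun hn => le_iInf fun s' => le_iInf fun hd' => ?_
            have hdx : dist s' x < δ + δ := by
              have := dist_triangle s' s x
              linarith
            have hG' : G m x = h m (δ + δ) x := by rw [hδδ]
            rw [hG']
            exact hb m (δ + δ) x n s' hn hdx
          exact key.trans (le_iSup_of_le δ (le_iSup_of_le hδpos le_rfl))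
        have hef : ∀ n, m ≤ n → ∀ x, e x ≤ f n x := by
          intro n hn x
          have h1 : e x ≤ h m δ x := by
            refine iSup_le fun ρ => iSup_le fun hρ => ?_
            exact iInf_le_of_le x (iInf_le _ (by simpa using hρ))
          exact h1.trans (hb m δ x n x hn (by simpa using hδpos))
        calc ∫⁻ s, G m s ∂(ν : Measure S) ≤ ∫⁻ s, e s ∂(ν : Measure S) :=
              lintegral_mono hGe
          _ ≤ atTop.liminf fun i => ∫⁻ s, e s ∂(μ i : Measure S) := gfw_aux_ennreal h_opens he_lsc
          _ ≤ liminf (fun n => ∫⁻ s, f n s ∂(μ n : Measure S)) atTop := by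
              refine liminf_le_liminf ?_
              filter_upwards [eventually_ge_atTop m] with n hn
              exact lintegral_mono (hef n hn)
end

section
/- Let S be a metric space, let {h} ∪ {h⁽ⁿ⁾ : n ∈ ℕ} be Borel-measurable real-valued functions on S that are uniformly bounded, let {μ⁽ⁿ⁾} be Borel probability measures on S converging in total variation to a Borel probability measure μ, and suppose sup_{B Borel in S} |∫_B h⁽ⁿ⁾(s) μ⁽ⁿ⁾(ds) − ∫_B h(s) μ(ds)| → 0 as n → ∞. Then h⁽ⁿ⁾ converges to h in μ-measure (for every ε > 0, μ{s : |h⁽ⁿ⁾(s) − h(s)| ≥ ε} → 0), and consequently there exists a subsequence {h⁽ⁿᵏ⁾} converging to h μ-almost surely. -/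
open MeasureTheory Filter Topology
open scoped ENNReal NNReal

/-!
For every Borel set `B`, the set integrals of `h⁽ⁿ⁾` against `μ⁽ⁿ⁾` and against `μ` differ by at
most `2M Dₙ`, where `Dₙ` is the total-variation distance: by the layer-cake formula, applied to
the positive and negative parts of `h⁽ⁿ⁾`, each half of the difference is an integral over
`t ∈ (0, M]` of differences `μ⁽ⁿ⁾(A) - μ(A)` for superlevel sets `A`. Hence
`|∫_B h⁽ⁿ⁾ dμ - ∫_B h dμ| ≤ 2M Dₙ + Eₙ → 0` uniformly in `B` (with `Eₙ` the assumed supremum),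
and choosing `B = {h⁽ⁿ⁾ - h ≥ ε}` and `B = {h - h⁽ⁿ⁾ ≥ ε}` gives the Markov-type bound
`ε μ{|h⁽ⁿ⁾ - h| ≥ ε} ≤ 2 (2M Dₙ + Eₙ)`. The almost surely convergent subsequence is Riesz's
theorem.
-/

open Set

section

variable {S : Type*} [MeasurableSpace S]

theorem integral_eq_setIntegral_Ioc_measureReal_lt {μ : Measure S} {g : S → ℝ} {C : ℝ}
    (hg : Integrable g μ) (g_nonneg : 0 ≤ g) (g_le : ∀ s, g s ≤ C) :
    ∫ s, g s ∂μ = ∫ t in Ioc 0 C, μ.real {s | t < g s} := by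
  rw [hg.integral_eq_integral_meas_lt (Eventually.of_forall g_nonneg)]
  refine setIntegral_eq_of_subset_of_forall_sdiff_eq_zero measurableSet_Ioi Ioc_subset_Ioi_self
    fun t ht => ?_
  have hCt : C < t := not_le.1 fun h => ht.2 ⟨ht.1, h⟩
  have : {s | t < g s} = ∅ := eq_empty_of_forall_notMem fun s hs => (g_le s).not_gt (hCt.trans hs)
  simp [this]

theorem integrableOn_Ioc_measureReal_lt (μ : Measure S) [IsFiniteMeasure μ] (g : S → ℝ) (C : ℝ) :
    IntegrableOn (fun t => μ.real {s | t < g s}) (Ioc 0 C) := by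
  have hanti : Antitone fun t => μ.real {s | t < g s} :=
    fun t t' htt' => measureReal_mono fun s hs => htt'.trans_lt hs
  refine Measure.integrableOn_of_bounded (M := μ.real univ) measure_Ioc_lt_top.ne
    hanti.measurable.aestronglyMeasurable (Eventually.of_forall fun t => ?_)
  rw [Real.norm_of_nonneg measureReal_nonneg]
  exact measureReal_mono (subset_univ _)

theorem abs_integral_sub_le_of_nonneg_of_le {ν ρ : Measure S} [IsFiniteMeasure ν]
    [IsFiniteMeasure ρ] {g : S → ℝ} {C D : ℝ} (hg : Measurable g) (g_nonneg : 0 ≤ g)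
    (g_le : ∀ s, g s ≤ C) (hC : 0 ≤ C)
    (hD : ∀ A, MeasurableSet A → |ν.real A - ρ.real A| ≤ D) :
    |∫ s, g s ∂ν - ∫ s, g s ∂ρ| ≤ C * D := by
  have hint : ∀ (κ : Measure S) [IsFiniteMeasure κ], Integrable g κ := fun κ _ =>
    .of_bound hg.aestronglyMeasurable C (Eventually.of_forall fun s => by
      rw [Real.norm_of_nonneg (g_nonneg s)]; exact g_le s)
  rw [integral_eq_setIntegral_Ioc_measureReal_lt (hint ν) g_nonneg g_le,
    integral_eq_setIntegral_Ioc_measureReal_lt (hint ρ) g_nonneg g_le,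
    ← integral_sub (integrableOn_Ioc_measureReal_lt ν g C)
      (integrableOn_Ioc_measureReal_lt ρ g C)]
  have := norm_setIntegral_le_of_norm_le_const (μ := volume) (s := Ioc 0 C)
    (f := fun t => ν.real {s | t < g s} - ρ.real {s | t < g s}) measure_Ioc_lt_top
    fun t _ => hD {s | t < g s} (measurableSet_lt measurable_const hg)
  simpa [hC, mul_comm] using this

theorem abs_integral_sub_le_of_abs_le {ν ρ : Measure S} [IsFiniteMeasure ν] [IsFiniteMeasure ρ]
    {f : S → ℝ} {M D : ℝ} (hf : Measurable f) (f_le : ∀ s, |f s| ≤ M) (hM : 0 ≤ M)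
    (hD : ∀ A, MeasurableSet A → |ν.real A - ρ.real A| ≤ D) :
    |∫ s, f s ∂ν - ∫ s, f s ∂ρ| ≤ 2 * M * D := by
  have hfi : ∀ (κ : Measure S) [IsFiniteMeasure κ], Integrable f κ := fun _ _ =>
    .of_bound hf.aestronglyMeasurable M (Eventually.of_forall f_le)
  have hpos := abs_integral_sub_le_of_nonneg_of_le (ν := ν) (ρ := ρ) (g := fun s => (f s)⁺)
    (hf.max measurable_const) (fun s => posPart_nonneg _)
    (fun s => sup_le ((le_abs_self _).trans (f_le s)) hM) hM hD
  have hneg := abs_integral_sub_le_of_nonneg_of_le (ν := ν) (ρ := ρ) (g := fun s => (f s)⁻)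
    (hf.neg.max measurable_const) (fun s => negPart_nonneg _)
    (fun s => sup_le ((neg_le_abs _).trans (f_le s)) hM) hM hD
  have hsplit : ∀ (κ : Measure S) [IsFiniteMeasure κ],
      ∫ s, f s ∂κ = ∫ s, (f s)⁺ ∂κ - ∫ s, (f s)⁻ ∂κ := fun κ _ => by
    rw [← integral_sub]
    · simp only [posPart_sub_negPart]
    · exact (hfi κ).pos_part
    · exact (hfi κ).neg_part
  rw [hsplit ν, hsplit ρ]
  calc _ = |(∫ s, (f s)⁺ ∂ν - ∫ s, (f s)⁺ ∂ρ) - (∫ s, (f s)⁻ ∂ν - ∫ s, (f s)⁻ ∂ρ)| := by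
        congr 1; ring
    _ ≤ M * D + M * D := (abs_sub _ _).trans (add_le_add hpos hneg)
    _ = 2 * M * D := by ring

theorem abs_setIntegral_sub_le_of_abs_le {ν ρ : Measure S} [IsFiniteMeasure ν]
    [IsFiniteMeasure ρ] {f : S → ℝ} {M D : ℝ} {B : Set S} (hf : Measurable f)
    (f_le : ∀ s, |f s| ≤ M) (hM : 0 ≤ M) (hB : MeasurableSet B)
    (hD : ∀ A, MeasurableSet A → |ν.real A - ρ.real A| ≤ D) :
    |∫ s in B, f s ∂ν - ∫ s in B, f s ∂ρ| ≤ 2 * M * D :=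
  abs_integral_sub_le_of_abs_le hf f_le hM fun A hA => by
    simpa only [measureReal_restrict_apply hA] using hD (A ∩ B) (hA.inter hB)

theorem abs_setIntegral_le_of_abs_le {ν : Measure S} [IsProbabilityMeasure ν] {f : S → ℝ}
    {M : ℝ} (f_le : ∀ s, |f s| ≤ M) (hM : 0 ≤ M) (B : Set S) : |∫ s in B, f s ∂ν| ≤ M :=
  calc |∫ s in B, f s ∂ν| ≤ M * ν.real B :=
        norm_setIntegral_le_of_norm_le_const (f := f) (measure_lt_top _ _) fun s _ => f_le s
    _ ≤ M := mul_le_of_le_one_right hM measureReal_le_one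

theorem mul_measureReal_le_of_setIntegral_sub_le {μ : Measure S} [IsFiniteMeasure μ]
    {f g : S → ℝ} {δ ε : ℝ} (hf : Measurable f) (hg : Measurable g) (hfi : Integrable f μ)
    (hgi : Integrable g μ)
    (hδ : ∀ B, MeasurableSet B → ∫ s in B, f s ∂μ - ∫ s in B, g s ∂μ ≤ δ) :
    ε * μ.real {s | ε ≤ f s - g s} ≤ δ := by
  have hB : MeasurableSet {s | ε ≤ f s - g s} := measurableSet_le measurable_const (hf.sub hg)
  calc ε * μ.real {s | ε ≤ f s - g s} ≤ ∫ s in {s | ε ≤ f s - g s}, (f s - g s) ∂μ :=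
        setIntegral_ge_of_const_le_real hB (measure_ne_top _ _) (fun _ hs => hs)
          (hfi.sub hgi).integrableOn
    _ ≤ δ := by rw [integral_sub hfi.integrableOn hgi.integrableOn]; exact hδ _ hB

theorem mul_measureReal_le_of_abs_setIntegral_sub_le {μ : Measure S} [IsFiniteMeasure μ]
    {f g : S → ℝ} {δ ε : ℝ} (hf : Measurable f) (hg : Measurable g) (hfi : Integrable f μ)
    (hgi : Integrable g μ) (hε : 0 ≤ ε)
    (hδ : ∀ B, MeasurableSet B → |∫ s in B, f s ∂μ - ∫ s in B, g s ∂μ| ≤ δ) :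
    ε * μ.real {s | ε ≤ |f s - g s|} ≤ 2 * δ := by
  have hfg := mul_measureReal_le_of_setIntegral_sub_le (ε := ε) hf hg hfi hgi
    fun B hB => (abs_le.1 (hδ B hB)).2
  have hgf := mul_measureReal_le_of_setIntegral_sub_le (ε := ε) hg hf hgi hfi
    fun B hB => by linarith [(abs_le.1 (hδ B hB)).1]
  have hsub : {s | ε ≤ |f s - g s|} ⊆ {s | ε ≤ f s - g s} ∪ {s | ε ≤ g s - f s} :=
    fun s (hs : ε ≤ |f s - g s|) => by
      simpa only [neg_sub, mem_union, mem_ofPred_eq] using le_abs.1 hs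
  calc ε * μ.real {s | ε ≤ |f s - g s|}
      ≤ ε * (μ.real {s | ε ≤ f s - g s} + μ.real {s | ε ≤ g s - f s}) :=
        mul_le_mul_of_nonneg_left ((measureReal_mono hsub).trans (measureReal_union_le _ _)) hε
    _ ≤ 2 * δ := by linarith

theorem tendstoInMeasure_of_abs_setIntegral_sub_le {ι : Type*} {l : Filter ι} {μ : Measure S}
    [IsFiniteMeasure μ] {f : ι → S → ℝ} {g : S → ℝ} {δ : ι → ℝ} (hf : ∀ i, Measurable (f i))
    (hg : Measurable g) (hfi : ∀ i, Integrable (f i) μ) (hgi : Integrable g μ)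
    (hδ : ∀ i B, MeasurableSet B → |∫ s in B, f i s ∂μ - ∫ s in B, g s ∂μ| ≤ δ i)
    (hδ_lim : Tendsto δ l (𝓝 0)) : TendstoInMeasure μ f l g := by
  refine tendstoInMeasure_iff_measureReal_norm.2 fun ε hε => ?_
  have hbound : ∀ i, μ.real {s | ε ≤ ‖f i s - g s‖} ≤ 2 * δ i / ε := fun i => by
    rw [le_div_iff₀' hε]
    exact mul_measureReal_le_of_abs_setIntegral_sub_le (hf i) hg (hfi i) hgi hε.le (hδ i)
  refine squeeze_zero (fun _ => measureReal_nonneg) hbound ?_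
  simpa using (hδ_lim.const_mul 2).div_const ε

end

theorem convergence_in_measure_of_setIntegrals_general {S : Type*}
    [MeasurableSpace S]
    (h : S → ℝ) (hs : ℕ → S → ℝ)
    (hmeas : Measurable h) (hsmeas : ∀ n, Measurable (hs n))
    (M : ℝ) (hbdd : ∀ s, |h s| ≤ M) (hsbdd : ∀ n s, |hs n s| ≤ M)
    (μs : ℕ → ProbabilityMeasure S) (μ : ProbabilityMeasure S)
    (hTV : Tendsto (fun n => ⨆ B : {B : Set S // MeasurableSet B},
        |((μs n) B.1 : ℝ) - (μ B.1 : ℝ)|) atTop (𝓝 0))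
    (hint : Tendsto (fun n => ⨆ B : {B : Set S // MeasurableSet B},
        |(∫ s in B.1, hs n s ∂(μs n : Measure S)) - ∫ s in B.1, h s ∂(μ : Measure S)|)
      atTop (𝓝 0)) :
    (∀ ε : ℝ, 0 < ε →
      Tendsto (fun n => (μ : Measure S) {s | ε ≤ |hs n s - h s|}) atTop (𝓝 0)) ∧
    ∃ φ : ℕ → ℕ, StrictMono φ ∧
      ∀ᵐ s ∂(μ : Measure S), Tendsto (fun k => hs (φ k) s) atTop (𝓝 (h s)) := by
  have hM : 0 ≤ M :=
    (abs_nonneg _).trans (hbdd (nonempty_of_isProbabilityMeasure (μ : Measure S)).some)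
  set D := fun n => ⨆ B : {B : Set S // MeasurableSet B}, |((μs n) B.1 : ℝ) - (μ B.1 : ℝ)|
  set E := fun n => ⨆ B : {B : Set S // MeasurableSet B},
    |(∫ s in B.1, hs n s ∂(μs n : Measure S)) - ∫ s in B.1, h s ∂(μ : Measure S)|
  have hD : ∀ n A, MeasurableSet A →
      |(μs n : Measure S).real A - (μ : Measure S).real A| ≤ D n := fun n A hA => by
    simp only [ProbabilityMeasure.measureReal_eq_coe_coeFn]
    refine le_ciSup_of_le ⟨1, forall_mem_range.2 fun B => ?_⟩ ⟨A, hA⟩ le_rfl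
    exact abs_sub_le_of_nonneg_of_le (by positivity) (by exact_mod_cast (μs n).apply_le_one _)
      (by positivity) (by exact_mod_cast μ.apply_le_one _)
  have hE : ∀ n B, MeasurableSet B →
      |(∫ s in B, hs n s ∂(μs n : Measure S)) - ∫ s in B, h s ∂(μ : Measure S)| ≤ E n :=
    fun n B hB => le_ciSup_of_le ⟨M + M, forall_mem_range.2 fun B => (abs_sub _ _).trans
      (add_le_add (abs_setIntegral_le_of_abs_le (hsbdd n) hM _)
        (abs_setIntegral_le_of_abs_le hbdd hM _))⟩ ⟨B, hB⟩ le_rfl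
  have hclose : ∀ n B, MeasurableSet B →
      |∫ s in B, hs n s ∂(μ : Measure S) - ∫ s in B, h s ∂(μ : Measure S)| ≤ 2 * M * D n + E n :=
    fun n B hB => (abs_sub_le _ (∫ s in B, hs n s ∂(μs n : Measure S)) _).trans <| add_le_add
      (by
        rw [abs_sub_comm]
        exact abs_setIntegral_sub_le_of_abs_le (hsmeas n) (hsbdd n) hM hB (hD n))
      (hE n B hB)
  have hconv : TendstoInMeasure (μ : Measure S) hs atTop h :=
    tendstoInMeasure_of_abs_setIntegral_sub_le hsmeas hmeas
      (fun n => .of_bound (hsmeas n).aestronglyMeasurable M (Eventually.of_forall (hsbdd n)))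
      (.of_bound hmeas.aestronglyMeasurable M (Eventually.of_forall hbdd)) hclose
      (by simpa using (hTV.const_mul (2 * M)).add hint)
  exact ⟨tendstoInMeasure_iff_norm.1 hconv, hconv.exists_seq_tendsto_ae⟩

/-- **Theorem (convergence in measure from uniform convergence of set integrals).**
Let `S` be a metric space, `h, h⁽ⁿ⁾` uniformly bounded Borel functions on `S`, and let
probability measures `μ⁽ⁿ⁾` converge in total variation to `μ`. If
`sup_{B Borel} |∫_B h⁽ⁿ⁾ dμ⁽ⁿ⁾ − ∫_B h dμ| → 0`, then `h⁽ⁿ⁾ → h` in `μ`-measure, and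
there is a subsequence converging to `h` `μ`-almost surely. -/
theorem convergence_in_measure_of_setIntegrals {S : Type*}
    [MetricSpace S] [MeasurableSpace S] [BorelSpace S]
    (h : S → ℝ) (hs : ℕ → S → ℝ)
    (hmeas : Measurable h) (hsmeas : ∀ n, Measurable (hs n))
    (M : ℝ) (hbdd : ∀ s, |h s| ≤ M) (hsbdd : ∀ n s, |hs n s| ≤ M)
    (μs : ℕ → ProbabilityMeasure S) (μ : ProbabilityMeasure S)
    (hTV : Tendsto (fun n => ⨆ B : {B : Set S // MeasurableSet B},
        |((μs n) B.1 : ℝ) - (μ B.1 : ℝ)|) atTop (𝓝 0))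
    (hint : Tendsto (fun n => ⨆ B : {B : Set S // MeasurableSet B},
        |(∫ s in B.1, hs n s ∂(μs n : Measure S)) - ∫ s in B.1, h s ∂(μ : Measure S)|)
      atTop (𝓝 0)) :
    (∀ ε : ℝ, 0 < ε →
      Tendsto (fun n => (μ : Measure S) {s | ε ≤ |hs n s - h s|}) atTop (𝓝 0)) ∧
    ∃ φ : ℕ → ℕ, StrictMono φ ∧
      ∀ᵐ s ∂(μ : Measure S), Tendsto (fun k => hs (φ k) s) atTop (𝓝 (h s)) :=
  convergence_in_measure_of_setIntegrals_general h hs hmeas hsmeas M hbdd hsbdd μs μ hTV hint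
end

section
/- Suppose the topology on X has a countable base τ_b = {O⁽ʲ⁾ : j = 1,2,…} such that for each finite intersection O = O⁽ʲ¹⁾ ∩ … ∩ O⁽ʲᴺ⁾ of elements of τ_b, the family of functions { (z,a) ↦ R(O×C|z,a) : C Borel in Y } is equicontinuous at every point (z,a) ∈ P(X)×A. Then for every stochastic kernel H on X given P(X)×A×Y satisfying the disintegration identity (3.4), and for every sequence (z⁽ⁿ⁾, a⁽ⁿ⁾) with z⁽ⁿ⁾ → z weakly in P(X) and a⁽ⁿ⁾ → a in A, there exist a subsequence (z⁽ⁿᵏ⁾, a⁽ⁿᵏ⁾) and a Borel set C* ⊆ Y such that R′(C*|z,a) = 1 and H(·|z⁽ⁿᵏ⁾, a⁽ⁿᵏ⁾, y) converges weakly to H(·|z,a,y) for every y ∈ C*. -/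
open MeasureTheory Filter Topology
open scoped ENNReal NNReal

/-- The joint kernel `R(B×C|z,a) = ∫_X ∫_B Q(C|a,x') P(dx'|x,a) z(dx)` of formula (3.3),
evaluated on the rectangle `B × C`. -/
noncomputable def Rfun {X Y A : Type*} [MeasurableSpace X] [MeasurableSpace Y]
    (P : X × A → ProbabilityMeasure X) (Q : A × X → ProbabilityMeasure Y)
    (z : ProbabilityMeasure X) (a : A) (B : Set X) (C : Set Y) : ℝ≥0∞ :=
  ∫⁻ x, (∫⁻ x' in B, ((Q (a, x') : Measure Y) C) ∂((P (x, a) : Measure X))) ∂(z : Measure X)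

/-- The marginal observation kernel `R'(dy|z,a)` on `Y` given `P(X)×A`, as a measure:
the distribution of the next observation, i.e. `z` pushed through `P(·|·,a)` and then
through `Q(·|a,·)`. -/
noncomputable def RprimeM {X Y A : Type*} [MeasurableSpace X] [MeasurableSpace Y]
    (P : X × A → ProbabilityMeasure X) (Q : A × X → ProbabilityMeasure Y)
    (z : ProbabilityMeasure X) (a : A) : Measure Y :=
  ((z : Measure X).bind fun x => (P (x, a) : Measure X)).bind fun x' => (Q (a, x') : Measure Y)

/-- The disintegration identity (3.4):
`R(B×C|z,a) = ∫_C H(B|z,a,y) R'(dy|z,a)` for all Borel `B ⊆ X`, `C ⊆ Y`. -/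
def Disint {X Y A : Type*} [MeasurableSpace X] [MeasurableSpace Y]
    (P : X × A → ProbabilityMeasure X) (Q : A × X → ProbabilityMeasure Y)
    (H : ProbabilityMeasure X × A × Y → ProbabilityMeasure X) : Prop :=
  ∀ (z : ProbabilityMeasure X) (a : A) (B : Set X) (C : Set Y),
    MeasurableSet B → MeasurableSet C →
      Rfun P Q z a B C = ∫⁻ y in C, ((H (z, a, y) : Measure X) B) ∂(RprimeM P Q z a)

/-- The Borel σ-algebra of the weak topology on `P(X)`. -/
noncomputable instance probabilityMeasureMeasurableSpace {X : Type*}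
    [MeasurableSpace X] [TopologicalSpace X] [OpensMeasurableSpace X] :
    MeasurableSpace (ProbabilityMeasure X) := borel _


/-!
Write `Rₙ`, `R'ₙ` for the kernels at `(zs n, as n)`. Equicontinuity makes `Rₙ(O × C) → R(O × C)`
uniformly in `C` for every finite intersection `O` of basis sets; by inclusion–exclusion this
extends to finite unions of basis sets, and since these exhaust `X`, `R'ₙ → R'` in total variation.
Disintegrating both sides through `H` turns the two uniform convergences into
`∫ |H(O | zs n, as n, y) - H(O | z, a, y)| R'(dy) → 0`, so a diagonal subsequence converges
`R'`-a.e. simultaneously for the countably many `O`. At such a `y`, convergence on finite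
intersections, hence on finite unions, of basis sets gives `H(G) ≤ liminf Hₖ(G)` for every open
`G`, which is weak convergence by the portmanteau theorem.
-/

open Set

section FiniteUnions

variable {α ι : Type*}

theorem biUnion_induction_of_inter_mem {S : Set (Set α)} (hS : ∀ s ∈ S, ∀ t ∈ S, s ∩ t ∈ S)
    {p : Set α → Prop} (hempty : p ∅) (hp : ∀ s ∈ S, p s)
    (hunion : ∀ s t, p s → p t → p (s ∩ t) → p (s ∪ t)) (I : Finset ι) {f : ι → Set α}
    (hf : ∀ i ∈ I, f i ∈ S) : p (⋃ i ∈ I, f i) := by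
  classical
  induction I using Finset.induction_on generalizing f with
  | empty => simpa using hempty
  | insert i I _ ih =>
    have hfi := hf i (Finset.mem_insert_self i I)
    have hfI : ∀ j ∈ I, f j ∈ S := fun j hj => hf j (Finset.mem_insert_of_mem hj)
    rw [Finset.set_biUnion_insert]
    refine hunion _ _ (hp _ hfi) (ih hfI) ?_
    rw [inter_iUnion₂]
    exact ih fun j hj => hS _ hfi _ (hfI j hj)

theorem biUnion_induction_of_biInter (τ : ι → Set α) {p : Set α → Prop} (hempty : p ∅)
    (hinter : ∀ J : Finset ι, J.Nonempty → p (⋂ j ∈ J, τ j))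
    (hunion : ∀ s t, p s → p t → p (s ∩ t) → p (s ∪ t)) (I : Finset ι) :
    p (⋃ i ∈ I, τ i) := by
  classical
  refine biUnion_induction_of_inter_mem
    (S := {s | ∃ J : Finset ι, J.Nonempty ∧ s = ⋂ j ∈ J, τ j}) ?_ hempty ?_ hunion I
    fun i _ => ⟨{i}, Finset.singleton_nonempty i, by simp⟩
  · rintro _ ⟨J, hJ, rfl⟩ _ ⟨K, -, rfl⟩
    exact ⟨J ∪ K, hJ.mono Finset.subset_union_left, Finset.iInf_union.symm⟩
  · rintro _ ⟨J, hJ, rfl⟩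
    exact hinter J hJ

end FiniteUnions

section UniformConvergence

variable {α Γ κ : Type*} [MeasurableSpace α] {l : Filter κ} {s : Set Γ}
  {ν : κ → Γ → Measure α} {ν₀ : Γ → Measure α} [∀ k c, IsFiniteMeasure (ν k c)]
  [∀ c, IsFiniteMeasure (ν₀ c)]

theorem TendstoUniformlyOn.measureReal_union {S T : Set α} (hT : MeasurableSet T)
    (hS : TendstoUniformlyOn (fun k c => (ν k c).real S) (fun c => (ν₀ c).real S) l s)
    (hT' : TendstoUniformlyOn (fun k c => (ν k c).real T) (fun c => (ν₀ c).real T) l s)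
    (hST : TendstoUniformlyOn (fun k c => (ν k c).real (S ∩ T))
      (fun c => (ν₀ c).real (S ∩ T)) l s) :
    TendstoUniformlyOn (fun k c => (ν k c).real (S ∪ T)) (fun c => (ν₀ c).real (S ∪ T)) l s := by
  have hmod : ∀ (μ : Measure α) [IsFiniteMeasure μ],
      μ.real (S ∪ T) = μ.real S + μ.real T - μ.real (S ∩ T) := fun μ _ =>
    eq_sub_of_add_eq (measureReal_union_add_inter hT)
  simp only [hmod]
  exact (hS.add hT').sub hST

theorem tendstoUniformlyOn_measureReal_biUnion {ι : Type*} {τ : ι → Set α}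
    (hτ : ∀ i, MeasurableSet (τ i))
    (h : ∀ J : Finset ι, J.Nonempty →
      TendstoUniformlyOn (fun k c => (ν k c).real (⋂ j ∈ J, τ j))
        (fun c => (ν₀ c).real (⋂ j ∈ J, τ j)) l s) (I : Finset ι) :
    TendstoUniformlyOn (fun k c => (ν k c).real (⋃ i ∈ I, τ i))
      (fun c => (ν₀ c).real (⋃ i ∈ I, τ i)) l s := by
  refine (biUnion_induction_of_biInter τ
    (p := fun B => MeasurableSet B ∧ TendstoUniformlyOn (fun k c => (ν k c).real B)
      (fun c => (ν₀ c).real B) l s) ?_ ?_ ?_ I).2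
  · simpa using tendsto_const_nhds.tendstoUniformlyOn_const s
  · exact fun J hJ => ⟨Finset.measurableSet_biInter J fun j _ => hτ j, h J hJ⟩
  · exact fun S T ⟨hS, hS'⟩ ⟨hT, hT'⟩ ⟨_, hST⟩ =>
      ⟨hS.union hT, hS'.measureReal_union hT hT' hST⟩

theorem tendstoUniformlyOn_of_tendsto_iSup_abs_sub {F : κ → Γ → ℝ} {f : Γ → ℝ}
    (hbdd : ∀ k, BddAbove (range fun c : s => |F k c - f c|))
    (h : Tendsto (fun k => ⨆ c : s, |F k c - f c|) l (𝓝 0)) : TendstoUniformlyOn F f l s := by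
  rw [Metric.tendstoUniformlyOn_iff]
  intro ε hε
  filter_upwards [h (Iio_mem_nhds hε)] with k hk c hc
  rw [dist_comm, Real.dist_eq]
  exact (le_ciSup (hbdd k) ⟨c, hc⟩).trans_lt hk

end UniformConvergence

section Portmanteau

variable {Ω : Type*} [MeasurableSpace Ω] [TopologicalSpace Ω] [OpensMeasurableSpace Ω]

-- `rfl` unfolds `probabilityMeasureMeasurableSpace`, which shadows Mathlib's Giry σ-algebra.
instance : BorelSpace (ProbabilityMeasure Ω) := ⟨rfl⟩

theorem ProbabilityMeasure.measurable_apply_of_isOpen [HasOuterApproxClosed Ω] {U : Set Ω}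
    (hU : IsOpen U) : Measurable fun μ : ProbabilityMeasure Ω => (μ : Measure Ω) U := by
  refine LowerSemicontinuous.measurable fun μ c hc => ?_
  exact eventually_lt_of_lt_liminf
    (hc.trans_le (ProbabilityMeasure.le_liminf_measure_open_of_tendsto tendsto_id hU))

theorem ProbabilityMeasure.tendsto_of_tendsto_measureReal_biUnion
    {τ : ℕ → Set Ω} (hτ : TopologicalSpace.IsTopologicalBasis (range τ))
    {μs : ℕ → ProbabilityMeasure Ω} {μ : ProbabilityMeasure Ω}
    (h : ∀ I : Finset ℕ, Tendsto (fun k => (μs k : Measure Ω).real (⋃ i ∈ I, τ i)) atTop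
      (𝓝 ((μ : Measure Ω).real (⋃ i ∈ I, τ i)))) :
    Tendsto μs atTop (𝓝 μ) := by
  classical
  refine tendsto_of_forall_isOpen_le_liminf' fun G hG => ?_
  set U : ℕ → Set Ω := fun n => ⋃ i ∈ (Finset.range n).filter (τ · ⊆ G), τ i
  have hUG : ∀ n, U n ⊆ G := fun n => iUnion₂_subset fun i hi => (Finset.mem_filter.1 hi).2
  have hU_mono : Monotone U := fun m n hmn =>
    biUnion_subset_biUnion_left (Finset.coe_subset.2
      (Finset.filter_subset_filter _ (Finset.range_mono hmn)))
  have hU_iUnion : ⋃ n, U n = G := by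
    refine (iUnion_subset hUG).antisymm fun x hx => ?_
    obtain ⟨_, ⟨i, rfl⟩, hxi, hiG⟩ := hτ.exists_subset_of_mem_open hx hG
    exact mem_iUnion.2 ⟨i + 1, mem_biUnion (by simp [hiG]) hxi⟩
  have hμU : Tendsto (fun n => (μ : Measure Ω) (U n)) atTop (𝓝 ((μ : Measure Ω) G)) := by
    rw [← hU_iUnion]
    exact tendsto_measure_iUnion_atTop hU_mono
  refine le_of_tendsto' hμU fun n => ?_
  have hμsU := (ENNReal.tendsto_toReal_iff (fun _ => measure_ne_top _ _) (measure_ne_top _ _)).1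
    (h ((Finset.range n).filter (τ · ⊆ G)))
  rw [← hμsU.liminf_eq]
  exact liminf_le_liminf (Eventually.of_forall fun k => measure_mono (hUG n))

theorem ProbabilityMeasure.tendsto_of_tendsto_measureReal_biInter
    {τ : ℕ → Set Ω} (hτ : TopologicalSpace.IsTopologicalBasis (range τ))
    {μs : ℕ → ProbabilityMeasure Ω} {μ : ProbabilityMeasure Ω}
    (h : ∀ J : Finset ℕ, J.Nonempty → Tendsto (fun k => (μs k : Measure Ω).real (⋂ j ∈ J, τ j))
      atTop (𝓝 ((μ : Measure Ω).real (⋂ j ∈ J, τ j)))) :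
    Tendsto μs atTop (𝓝 μ) := by
  refine tendsto_of_tendsto_measureReal_biUnion hτ fun I => ?_
  have hI := tendstoUniformlyOn_measureReal_biUnion (ν := fun k (_ : Unit) => (μs k : Measure Ω))
    (ν₀ := fun _ => (μ : Measure Ω)) (s := {()}) (fun i => (hτ.isOpen ⟨i, rfl⟩).measurableSet)
    (fun J hJ => tendstoUniformlyOn_singleton_iff_tendsto.2 (h J hJ)) I
  rwa [tendstoUniformlyOn_singleton_iff_tendsto] at hI

end Portmanteau

section TotalVariation

variable {Y : Type*} [MeasurableSpace Y]

theorem integrable_of_forall_mem_Icc {μ : Measure Y} [IsFiniteMeasure μ] {f : Y → ℝ}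
    (hf : Measurable f) (hf01 : ∀ y, f y ∈ Icc 0 1) : Integrable f μ :=
  Integrable.of_bound hf.aestronglyMeasurable 1 (ae_of_all _ fun y => by
    rw [Real.norm_eq_abs, abs_of_nonneg (hf01 y).1]
    exact (hf01 y).2)

theorem integral_abs_le_two_mul_of_forall_abs_setIntegral_le {μ : Measure Y} {f : Y → ℝ}
    (hf : Integrable f μ) (hfm : Measurable f) {ε : ℝ}
    (h : ∀ C, MeasurableSet C → |∫ y in C, f y ∂μ| ≤ ε) : ∫ y, |f y| ∂μ ≤ 2 * ε := by
  have hC : MeasurableSet {y | 0 ≤ f y} := measurableSet_le measurable_const hfm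
  have hpos : ∫ y in {y | 0 ≤ f y}, |f y| ∂μ = ∫ y in {y | 0 ≤ f y}, f y ∂μ :=
    setIntegral_congr_fun hC fun y hy => abs_of_nonneg hy
  have hneg : ∫ y in {y | 0 ≤ f y}ᶜ, |f y| ∂μ = -∫ y in {y | 0 ≤ f y}ᶜ, f y ∂μ := by
    rw [← integral_neg]
    exact setIntegral_congr_fun hC.compl fun y hy => abs_of_neg (not_le.1 hy)
  rw [← integral_add_compl hC hf.abs, hpos, hneg]
  linarith [le_abs_self (∫ y in {y | 0 ≤ f y}, f y ∂μ),
    neg_abs_le (∫ y in {y | 0 ≤ f y}ᶜ, f y ∂μ), h _ hC, h _ hC.compl]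

theorem integral_eq_setIntegral_measureReal_lt {ρ : Measure Y} [IsFiniteMeasure ρ] {g : Y → ℝ}
    (hg : Measurable g) (hg01 : ∀ y, g y ∈ Icc 0 1) :
    ∫ y, g y ∂ρ = ∫ t in Ioc (0 : ℝ) 1, ρ.real {y | t < g y} := by
  rw [(integrable_of_forall_mem_Icc hg hg01).integral_eq_integral_meas_lt
      (ae_of_all _ fun y => (hg01 y).1),
    setIntegral_eq_of_subset_of_forall_sdiff_eq_zero measurableSet_Ioi Ioc_subset_Ioi_self]
  rintro t ⟨ht0, ht1⟩
  have hempty : {y | t < g y} = ∅ := eq_empty_of_forall_notMem fun y hy =>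
    ht1 ⟨ht0, (hy.trans_le (hg01 y).2).le⟩
  simp [hempty]

theorem abs_integral_sub_integral_le_of_forall_abs_measureReal_sub_le {μ ν : Measure Y}
    [IsFiniteMeasure μ] [IsFiniteMeasure ν] {g : Y → ℝ} (hg : Measurable g)
    (hg01 : ∀ y, g y ∈ Icc 0 1) {ε : ℝ} (h : ∀ C, MeasurableSet C → |μ.real C - ν.real C| ≤ ε) :
    |∫ y, g y ∂μ - ∫ y, g y ∂ν| ≤ ε := by
  have hanti : ∀ (ρ : Measure Y) [IsFiniteMeasure ρ], Antitone fun t => ρ.real {y | t < g y} :=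
    fun ρ _ s t hst => measureReal_mono fun y (hy : t < g y) => hst.trans_lt hy
  have hint : ∀ (ρ : Measure Y) [IsFiniteMeasure ρ],
      IntegrableOn (fun t => ρ.real {y | t < g y}) (Ioc (0 : ℝ) 1) := fun ρ _ =>
    Measure.integrableOn_of_bounded (by simp) (hanti ρ).measurable.aestronglyMeasurable
      (M := ρ.real univ) (ae_of_all _ fun t => by
        rw [Real.norm_eq_abs, abs_of_nonneg measureReal_nonneg]
        exact measureReal_mono (subset_univ _))
  rw [integral_eq_setIntegral_measureReal_lt hg hg01,
    integral_eq_setIntegral_measureReal_lt hg hg01, ← integral_sub (hint μ) (hint ν)]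
  calc ‖∫ t in Ioc (0 : ℝ) 1, (μ.real {y | t < g y} - ν.real {y | t < g y})‖
      ≤ ε * volume.real (Ioc (0 : ℝ) 1) :=
        norm_setIntegral_le_of_norm_le_const (by simp) fun t _ =>
          h _ (measurableSet_lt measurable_const hg)
    _ = ε := by simp

theorem tendsto_integral_abs_sub_of_tendstoUniformlyOn {κ : Type*} {l : Filter κ}
    {μ : κ → Measure Y} {μ₀ : Measure Y} [∀ k, IsFiniteMeasure (μ k)] [IsFiniteMeasure μ₀]
    {g : κ → Y → ℝ} {g₀ : Y → ℝ} (hg : ∀ k, Measurable (g k)) (hg₀ : Measurable g₀)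
    (hg01 : ∀ k y, g k y ∈ Icc 0 1) (hg₀01 : ∀ y, g₀ y ∈ Icc 0 1)
    (hμ : TendstoUniformlyOn (fun k C => (μ k).real C) (fun C => μ₀.real C) l
      {C | MeasurableSet C})
    (hgμ : TendstoUniformlyOn (fun k C => ∫ y in C, g k y ∂(μ k))
      (fun C => ∫ y in C, g₀ y ∂μ₀) l {C | MeasurableSet C}) :
    Tendsto (fun k => ∫ y, |g k y - g₀ y| ∂μ₀) l (𝓝 0) := by
  rw [Metric.tendsto_nhds]
  intro ε hε
  filter_upwards [Metric.tendstoUniformlyOn_iff.1 hμ (ε / 8) (by positivity),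
    Metric.tendstoUniformlyOn_iff.1 hgμ (ε / 8) (by positivity)] with k hμk hgk
  have hint_k := integrable_of_forall_mem_Icc (μ := μ₀) (hg k) (hg01 k)
  have hint₀ := integrable_of_forall_mem_Icc (μ := μ₀) hg₀ hg₀01
  have hC : ∀ C, MeasurableSet C → |∫ y in C, (g k y - g₀ y) ∂μ₀| ≤ ε / 8 + ε / 8 := by
    intro C hC
    have hchange : |∫ y in C, g k y ∂μ₀ - ∫ y in C, g k y ∂(μ k)| ≤ ε / 8 :=
      abs_integral_sub_integral_le_of_forall_abs_measureReal_sub_le (hg k) (hg01 k)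
        fun D hD => by
          rw [measureReal_restrict_apply hD, measureReal_restrict_apply hD, ← Real.dist_eq]
          exact (hμk _ (hD.inter hC)).le
    have hlim := hgk C hC
    rw [Real.dist_eq, abs_sub_comm] at hlim
    rw [integral_sub hint_k.integrableOn hint₀.integrableOn]
    calc _ ≤ |∫ y in C, g k y ∂μ₀ - ∫ y in C, g k y ∂(μ k)|
          + |∫ y in C, g k y ∂(μ k) - ∫ y in C, g₀ y ∂μ₀| := abs_sub_le _ _ _
      _ ≤ ε / 8 + ε / 8 := add_le_add hchange hlim.le
  have hL1 := integral_abs_le_two_mul_of_forall_abs_setIntegral_le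
    (hint_k.sub hint₀) ((hg k).sub hg₀) hC
  simp only [Pi.sub_apply] at hL1
  rw [Real.dist_eq, sub_zero, abs_of_nonneg (integral_nonneg fun y => abs_nonneg _)]
  linarith

end TotalVariation

section Subsequence

variable {Y : Type*} [MeasurableSpace Y] {μ : Measure Y}

theorem ae_tendsto_zero_of_tsum_lintegral_ne_top {f : ℕ → Y → ℝ≥0∞}
    (hf : ∀ n, AEMeasurable (f n) μ) (h : ∑' n, ∫⁻ y, f n y ∂μ ≠ ∞) :
    ∀ᵐ y ∂μ, Tendsto (fun n => f n y) atTop (𝓝 0) := by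
  rw [← lintegral_tsum hf] at h
  filter_upwards [ae_lt_top' (AEMeasurable.tsum hf) h] with y hy
  exact ENNReal.tendsto_atTop_zero_of_tsum_ne_top hy.ne

theorem exists_strictMono_ae_tendsto_zero {ι : Type*} [Countable ι] {f : ι → ℕ → Y → ℝ}
    (hf : ∀ i n, Integrable (f i n) μ)
    (h : ∀ i, Tendsto (fun n => ∫ y, |f i n y| ∂μ) atTop (𝓝 0)) :
    ∃ φ : ℕ → ℕ, StrictMono φ ∧ ∀ᵐ y ∂μ, ∀ i, Tendsto (fun k => f i (φ k) y) atTop (𝓝 0) := by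
  rcases isEmpty_or_nonempty ι with hι | hι
  · exact ⟨id, strictMono_id, ae_of_all _ fun _ i => isEmptyElim i⟩
  obtain ⟨e, he⟩ := exists_surjective_nat ι
  have hL1 : ∀ m n, ∫⁻ y, ‖f (e m) n y‖ₑ ∂μ = ENNReal.ofReal (∫ y, |f (e m) n y| ∂μ) :=
    fun m n => (ofReal_integral_norm_eq_lintegral_enorm (hf (e m) n)).symm
  obtain ⟨φ, hφ, hsmall⟩ := extraction_forall_of_eventually
    (P := fun k n => ∀ m ≤ k, ∫⁻ y, ‖f (e m) n y‖ₑ ∂μ ≤ 2⁻¹ ^ k) fun k => by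
      refine (Set.finite_le_nat k).eventually_all.2 fun m _ => ?_
      have hm := (ENNReal.tendsto_ofReal (h (e m))).congr fun n => (hL1 m n).symm
      rw [ENNReal.ofReal_zero] at hm
      exact (ENNReal.tendsto_nhds_zero.1 hm) _ (ENNReal.pow_pos (by norm_num) k)
  have hae : ∀ m, ∀ᵐ y ∂μ, Tendsto (fun k => f (e m) (φ k) y) atTop (𝓝 0) := fun m => by
    have hsum : ∑' k, ∫⁻ y, ‖f (e m) (φ (k + m)) y‖ₑ ∂μ ≠ ∞ := by
      refine ne_top_of_le_ne_top ?_ (ENNReal.tsum_le_tsum fun k =>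
        (hsmall (k + m) m le_add_self).trans
          (pow_le_pow_right_of_le_one' (by norm_num) le_self_add))
      rw [ENNReal.tsum_geometric_two]
      exact ENNReal.ofNat_ne_top
    filter_upwards [ae_tendsto_zero_of_tsum_lintegral_ne_top
      (fun k => (hf (e m) (φ (k + m))).aestronglyMeasurable.enorm) hsum] with y hy
    exact (tendsto_add_atTop_iff_nat m).1 (tendsto_zero_iff_enorm_tendsto_zero.2 hy)
  refine ⟨φ, hφ, (ae_all_iff.2 hae).mono fun y hy i => ?_⟩
  obtain ⟨m, rfl⟩ := he i
  exact hy m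

theorem exists_measurableSet_measure_eq_one_of_ae [IsProbabilityMeasure μ] {p : Y → Prop}
    (h : ∀ᵐ y ∂μ, p y) : ∃ C, MeasurableSet C ∧ μ C = 1 ∧ ∀ y ∈ C, p y := by
  obtain ⟨t, hsub, htm, ht0⟩ := exists_measurable_superset_of_null (ae_iff.1 h)
  refine ⟨tᶜ, htm.compl, by rw [prob_compl_eq_one_sub htm, ht0, tsub_zero], fun y hy => ?_⟩
  by_contra hpy
  exact hy (hsub hpy)

end Subsequence

section ObservationKernel

variable {X Y A : Type*} [MeasurableSpace X] [MeasurableSpace Y]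
  {P : X × A → ProbabilityMeasure X} {Q : A × X → ProbabilityMeasure Y}
  {z : ProbabilityMeasure X} {a : A}

/-- The measure `B ↦ R(B × C | z, a)` on `X`. -/
noncomputable def Rmeasure (P : X × A → ProbabilityMeasure X) (Q : A × X → ProbabilityMeasure Y)
    (z : ProbabilityMeasure X) (a : A) (C : Set Y) : Measure X :=
  ((z : Measure X).bind fun x => (P (x, a) : Measure X)).withDensity
    fun x' => (Q (a, x') : Measure Y) C

theorem Rmeasure_univ :
    Rmeasure P Q z a univ = (z : Measure X).bind fun x => (P (x, a) : Measure X) := by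
  simp [Rmeasure]

theorem Rmeasure_le_Rmeasure_univ (C : Set Y) : Rmeasure P Q z a C ≤ Rmeasure P Q z a univ :=
  withDensity_mono (ae_of_all _ fun _ => measure_mono (subset_univ C))

variable [MeasurableSpace A]

theorem isProbabilityMeasure_Rmeasure_univ (hP : Measurable fun p => (P p : Measure X)) :
    IsProbabilityMeasure (Rmeasure P Q z a univ) := by
  rw [Rmeasure_univ]
  exact isProbabilityMeasure_bind (hP.comp (measurable_id.prodMk measurable_const)).aemeasurable
    (ae_of_all _ fun _ => inferInstance)

theorem isFiniteMeasure_Rmeasure (hP : Measurable fun p => (P p : Measure X)) (C : Set Y) :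
    IsFiniteMeasure (Rmeasure P Q z a C) :=
  have := isProbabilityMeasure_Rmeasure_univ (Q := Q) (z := z) (a := a) hP
  isFiniteMeasure_of_le _ (Rmeasure_le_Rmeasure_univ C)

theorem Rmeasure_real_le_one (hP : Measurable fun p => (P p : Measure X)) {B : Set X}
    {C : Set Y} : (Rmeasure P Q z a C).real B ≤ 1 := by
  have := isProbabilityMeasure_Rmeasure_univ (Q := Q) (z := z) (a := a) hP
  exact (ENNReal.toReal_mono (measure_ne_top _ _) (Rmeasure_le_Rmeasure_univ C B)).trans
    measureReal_le_one

theorem Rmeasure_real_compl_le (hP : Measurable fun p => (P p : Measure X)) {B : Set X}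
    (hB : MeasurableSet B) (C : Set Y) :
    (Rmeasure P Q z a C).real Bᶜ ≤ 1 - (Rmeasure P Q z a univ).real B := by
  have := isProbabilityMeasure_Rmeasure_univ (Q := Q) (z := z) (a := a) hP
  rw [← probReal_compl_eq_one_sub hB]
  exact ENNReal.toReal_mono (measure_ne_top _ _) (Rmeasure_le_Rmeasure_univ C Bᶜ)

theorem Rfun_eq_Rmeasure (hP : Measurable fun p => (P p : Measure X))
    (hQ : Measurable fun p => (Q p : Measure Y)) {B : Set X} (hB : MeasurableSet B) {C : Set Y}
    (hC : MeasurableSet C) : Rfun P Q z a B C = Rmeasure P Q z a C B := by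
  have hPa : Measurable fun x => (P (x, a) : Measure X) :=
    hP.comp (measurable_id.prodMk measurable_const)
  have hg : Measurable fun x' => (Q (a, x') : Measure Y) C :=
    (Measure.measurable_coe hC).comp (hQ.comp (measurable_const.prodMk measurable_id))
  rw [Rmeasure, withDensity_apply _ hB, ← lintegral_indicator hB,
    Measure.lintegral_bind hPa.aemeasurable (hg.indicator hB).aemeasurable]
  simp only [Rfun, lintegral_indicator hB]

theorem RprimeM_apply (hQ : Measurable fun p => (Q p : Measure Y)) {C : Set Y}
    (hC : MeasurableSet C) : RprimeM P Q z a C = Rmeasure P Q z a C univ := by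
  have hQa : Measurable fun x' => (Q (a, x') : Measure Y) :=
    hQ.comp (measurable_const.prodMk measurable_id)
  rw [RprimeM, Measure.bind_apply hC hQa.aemeasurable, Rmeasure,
    withDensity_apply _ MeasurableSet.univ, Measure.restrict_univ]

theorem isProbabilityMeasure_RprimeM (hP : Measurable fun p => (P p : Measure X))
    (hQ : Measurable fun p => (Q p : Measure Y)) : IsProbabilityMeasure (RprimeM P Q z a) := by
  have := isProbabilityMeasure_Rmeasure_univ (Q := Q) (z := z) (a := a) hP
  exact ⟨by rw [RprimeM_apply hQ MeasurableSet.univ, measure_univ]⟩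

theorem Rmeasure_real_eq_setIntegral (hP : Measurable fun p => (P p : Measure X))
    (hQ : Measurable fun p => (Q p : Measure Y))
    {H : ProbabilityMeasure X × A × Y → ProbabilityMeasure X} (hH : Disint P Q H) {B : Set X}
    (hB : MeasurableSet B) (hHB : Measurable fun y => (H (z, a, y) : Measure X) B) {C : Set Y}
    (hC : MeasurableSet C) :
    (Rmeasure P Q z a C).real B =
      ∫ y in C, (H (z, a, y) : Measure X).real B ∂(RprimeM P Q z a) := by
  rw [measureReal_def, ← Rfun_eq_Rmeasure hP hQ hB hC, hH z a B C hB hC]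
  exact (integral_toReal hHB.aemeasurable (ae_of_all _ fun y => measure_lt_top _ _)).symm

end ObservationKernel

section Convergence

variable {X Y A κ : Type*} [MeasurableSpace X] [MeasurableSpace Y] [MeasurableSpace A]
  {P : X × A → ProbabilityMeasure X} {Q : A × X → ProbabilityMeasure Y}
  {l : Filter κ} {zs : κ → ProbabilityMeasure X} {as : κ → A} {z : ProbabilityMeasure X} {a : A}

theorem tendstoUniformlyOn_Rmeasure_of_tendsto_iSup [TopologicalSpace X]
    [OpensMeasurableSpace X] [TopologicalSpace A] (hP : Measurable fun p => (P p : Measure X))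
    (hQ : Measurable fun p => (Q p : Measure Y)) {B : Set X} (hB : MeasurableSet B)
    (hequi : Tendsto (fun p : ProbabilityMeasure X × A =>
        ⨆ C : {C : Set Y // MeasurableSet C},
          |(Rfun P Q p.1 p.2 B C.1).toReal - (Rfun P Q z a B C.1).toReal|) (𝓝 (z, a)) (𝓝 0))
    (hlim : Tendsto (fun k => (zs k, as k)) l (𝓝 (z, a))) :
    TendstoUniformlyOn (fun k C => (Rmeasure P Q (zs k) (as k) C).real B)
      (fun C => (Rmeasure P Q z a C).real B) l {C | MeasurableSet C} := by
  have hR : ∀ w b (C : {C : Set Y // MeasurableSet C}),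
      (Rfun P Q w b B C.1).toReal = (Rmeasure P Q w b C.1).real B := fun w b C => by
    rw [Rfun_eq_Rmeasure hP hQ hB C.2, measureReal_def]
  refine tendstoUniformlyOn_of_tendsto_iSup_abs_sub (fun k => ⟨1, ?_⟩) ?_
  · rintro _ ⟨C, rfl⟩
    exact abs_sub_le_of_nonneg_of_le measureReal_nonneg (Rmeasure_real_le_one hP)
      measureReal_nonneg (Rmeasure_real_le_one hP)
  · have h := hequi.comp hlim
    simp only [hR, Function.comp_def] at h
    exact h

theorem tendstoUniformlyOn_RprimeM (hP : Measurable fun p => (P p : Measure X))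
    (hQ : Measurable fun p => (Q p : Measure Y)) {W : ℕ → Set X}
    (hWm : ∀ m, MeasurableSet (W m)) (hW_mono : Monotone W) (hW_iUnion : ⋃ m, W m = univ)
    (hconv : ∀ m, TendstoUniformlyOn (fun k C => (Rmeasure P Q (zs k) (as k) C).real (W m))
      (fun C => (Rmeasure P Q z a C).real (W m)) l {C | MeasurableSet C}) :
    TendstoUniformlyOn (fun k C => (RprimeM P Q (zs k) (as k)).real C)
      (fun C => (RprimeM P Q z a).real C) l {C | MeasurableSet C} := by
  have := isProbabilityMeasure_Rmeasure_univ (Q := Q) (z := z) (a := a) hP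
  have _ : ∀ w b C, IsFiniteMeasure (Rmeasure P Q w b C) := fun _ _ C =>
    isFiniteMeasure_Rmeasure hP C
  rw [Metric.tendstoUniformlyOn_iff]
  intro ε hε
  have hW_lim : Tendsto (fun m => (Rmeasure P Q z a univ).real (W m)) atTop (𝓝 1) := by
    have h := tendsto_measure_iUnion_atTop (μ := Rmeasure P Q z a univ) hW_mono
    rw [hW_iUnion, measure_univ] at h
    rw [← ENNReal.toReal_one]
    exact (ENNReal.tendsto_toReal ENNReal.one_ne_top).comp h
  obtain ⟨m, hm⟩ := (hW_lim.eventually (Ioi_mem_nhds (by linarith : 1 - ε / 4 < 1))).exists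
  filter_upwards [Metric.tendstoUniformlyOn_iff.1 (hconv m) (ε / 4) (by positivity)]
    with k hk C hC
  -- `R'(C) = R(W × C) + R(Wᶜ × C)`, where the last term is small since `W` has almost full mass.
  have hsplit : ∀ w b, (RprimeM P Q w b).real C =
      (Rmeasure P Q w b C).real (W m) + (Rmeasure P Q w b C).real (W m)ᶜ := fun w b => by
    rw [measureReal_add_measureReal_compl (hWm m), measureReal_def, measureReal_def,
      RprimeM_apply hQ hC]
  have hcompl : ∀ w b,
      (Rmeasure P Q w b C).real (W m)ᶜ ≤ 1 - (Rmeasure P Q w b univ).real (W m) :=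
    fun w b => Rmeasure_real_compl_le hP (hWm m) C
  have hC_lim := hk C hC
  have huniv_lim := hk univ MeasurableSet.univ
  rw [Real.dist_eq, abs_lt] at hC_lim huniv_lim ⊢
  constructor <;> linarith [hsplit z a, hsplit (zs k) (as k), hcompl z a, hcompl (zs k) (as k),
    measureReal_nonneg (μ := Rmeasure P Q z a C) (s := (W m)ᶜ),
    measureReal_nonneg (μ := Rmeasure P Q (zs k) (as k) C) (s := (W m)ᶜ)]

theorem tendstoUniformlyOn_RprimeM_of_biInter (hP : Measurable fun p => (P p : Measure X))
    (hQ : Measurable fun p => (Q p : Measure Y)) {τ : ℕ → Set X} (hτ : ∀ i, MeasurableSet (τ i))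
    (hτ_iUnion : ⋃ i, τ i = univ)
    (h : ∀ J : Finset ℕ, J.Nonempty →
      TendstoUniformlyOn (fun k C => (Rmeasure P Q (zs k) (as k) C).real (⋂ j ∈ J, τ j))
        (fun C => (Rmeasure P Q z a C).real (⋂ j ∈ J, τ j)) l {C | MeasurableSet C}) :
    TendstoUniformlyOn (fun k C => (RprimeM P Q (zs k) (as k)).real C)
      (fun C => (RprimeM P Q z a).real C) l {C | MeasurableSet C} := by
  have _ : ∀ w b C, IsFiniteMeasure (Rmeasure P Q w b C) := fun _ _ C =>
    isFiniteMeasure_Rmeasure hP C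
  refine tendstoUniformlyOn_RprimeM hP hQ (W := fun m => ⋃ i ∈ Finset.range m, τ i)
    (fun m => Finset.measurableSet_biUnion _ fun i _ => hτ i)
    (fun m n hmn => biUnion_subset_biUnion_left (Finset.coe_subset.2 (Finset.range_mono hmn)))
    (eq_univ_of_forall fun x => ?_) fun m => tendstoUniformlyOn_measureReal_biUnion
      (ν := fun k C => Rmeasure P Q (zs k) (as k) C) (ν₀ := fun C => Rmeasure P Q z a C) hτ h _
  obtain ⟨i, hx⟩ := mem_iUnion.1 (hτ_iUnion ▸ mem_univ x)
  exact mem_iUnion.2 ⟨i + 1, mem_iUnion₂.2 ⟨i, Finset.self_mem_range_succ i, hx⟩⟩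

variable {H : ProbabilityMeasure X × A × Y → ProbabilityMeasure X}

theorem tendsto_integral_abs_sub_of_disint (hP : Measurable fun p => (P p : Measure X))
    (hQ : Measurable fun p => (Q p : Measure Y)) (hH : Disint P Q H) {B : Set X}
    (hB : MeasurableSet B) (hHB : ∀ w b, Measurable fun y => (H (w, b, y) : Measure X) B)
    (hTV : TendstoUniformlyOn (fun k C => (RprimeM P Q (zs k) (as k)).real C)
      (fun C => (RprimeM P Q z a).real C) l {C | MeasurableSet C})
    (hRB : TendstoUniformlyOn (fun k C => (Rmeasure P Q (zs k) (as k) C).real B)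
      (fun C => (Rmeasure P Q z a C).real B) l {C | MeasurableSet C}) :
    Tendsto (fun k => ∫ y, |(H (zs k, as k, y) : Measure X).real B -
      (H (z, a, y) : Measure X).real B| ∂(RprimeM P Q z a)) l (𝓝 0) := by
  have _ : ∀ w b, IsProbabilityMeasure (RprimeM P Q w b) := fun _ _ =>
    isProbabilityMeasure_RprimeM hP hQ
  have hHB' : ∀ w b, Measurable fun y => (H (w, b, y) : Measure X).real B :=
    fun w b => (hHB w b).ennreal_toReal
  refine tendsto_integral_abs_sub_of_tendstoUniformlyOn (fun k => hHB' _ _) (hHB' z a)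
    (fun _ _ => ⟨measureReal_nonneg, measureReal_le_one⟩)
    (fun _ => ⟨measureReal_nonneg, measureReal_le_one⟩) hTV ?_
  refine (hRB.congr (Eventually.of_forall fun k C hC => ?_)).congr_right fun C hC => ?_ <;>
    exact Rmeasure_real_eq_setIntegral hP hQ hH hB (hHB _ _) hC

theorem exists_strictMono_ae_tendsto_of_disint {zs : ℕ → ProbabilityMeasure X} {as : ℕ → A}
    (hP : Measurable fun p => (P p : Measure X)) (hQ : Measurable fun p => (Q p : Measure Y))
    (hH : Disint P Q H) {ι : Type*} [Countable ι] {B : ι → Set X}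
    (hB : ∀ i, MeasurableSet (B i))
    (hHB : ∀ i w b, Measurable fun y => (H (w, b, y) : Measure X) (B i))
    (hTV : TendstoUniformlyOn (fun k C => (RprimeM P Q (zs k) (as k)).real C)
      (fun C => (RprimeM P Q z a).real C) atTop {C | MeasurableSet C})
    (hRB : ∀ i, TendstoUniformlyOn (fun k C => (Rmeasure P Q (zs k) (as k) C).real (B i))
      (fun C => (Rmeasure P Q z a C).real (B i)) atTop {C | MeasurableSet C}) :
    ∃ φ : ℕ → ℕ, StrictMono φ ∧ ∀ᵐ y ∂(RprimeM P Q z a), ∀ i,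
      Tendsto (fun k => (H (zs (φ k), as (φ k), y) : Measure X).real (B i)) atTop
        (𝓝 ((H (z, a, y) : Measure X).real (B i))) := by
  have _ := isProbabilityMeasure_RprimeM (z := z) (a := a) hP hQ
  have hint : ∀ i w b, Integrable (fun y => (H (w, b, y) : Measure X).real (B i))
      (RprimeM P Q z a) := fun i w b =>
    integrable_of_forall_mem_Icc (hHB i w b).ennreal_toReal fun _ =>
      ⟨measureReal_nonneg, measureReal_le_one⟩
  obtain ⟨φ, hφ, hae⟩ := exists_strictMono_ae_tendsto_zero
    (f := fun i n y => (H (zs n, as n, y) : Measure X).real (B i) -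
      (H (z, a, y) : Measure X).real (B i))
    (fun i n => (hint i _ _).sub (hint i _ _))
    fun i => tendsto_integral_abs_sub_of_disint hP hQ hH (hB i) (hHB i) hTV (hRB i)
  exact ⟨φ, hφ, hae.mono fun y hy i => tendsto_sub_nhds_zero_iff.1 (hy i)⟩

end Convergence

theorem assumptionH_of_countable_base_general {X Y A : Type*}
    [MetricSpace X] [MeasurableSpace X] [BorelSpace X]
    [MeasurableSpace Y]
    [MetricSpace A] [MeasurableSpace A]
    (P : X × A → ProbabilityMeasure X) (Q : A × X → ProbabilityMeasure Y)
    (hPmeas : Measurable fun p => (P p : Measure X))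
    (hQmeas : Measurable fun p => (Q p : Measure Y))
    (τb : ℕ → Set X) (hbase : TopologicalSpace.IsTopologicalBasis (Set.range τb))
    (hequi : ∀ J : Finset ℕ, J.Nonempty → ∀ (z : ProbabilityMeasure X) (a : A),
      Tendsto (fun p : ProbabilityMeasure X × A =>
          ⨆ C : {C : Set Y // MeasurableSet C},
            |(Rfun P Q p.1 p.2 (⋂ j ∈ J, τb j) C.1).toReal -
              (Rfun P Q z a (⋂ j ∈ J, τb j) C.1).toReal|)
        (𝓝 (z, a)) (𝓝 0))
    (H : ProbabilityMeasure X × A × Y → ProbabilityMeasure X)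
    (hHmeas : Measurable H)
    (hH : Disint P Q H)
    (zs : ℕ → ProbabilityMeasure X) (z : ProbabilityMeasure X) (as : ℕ → A) (a : A)
    (hz : Tendsto zs atTop (𝓝 z)) (ha : Tendsto as atTop (𝓝 a)) :
    ∃ φ : ℕ → ℕ, StrictMono φ ∧ ∃ Cstar : Set Y, MeasurableSet Cstar ∧
      RprimeM P Q z a Cstar = 1 ∧
      ∀ y ∈ Cstar,
        Tendsto (fun k => H (zs (φ k), as (φ k), y)) atTop (𝓝 (H (z, a, y))) := by
  have hτ_inter : ∀ J : Finset ℕ, IsOpen (⋂ j ∈ J, τb j) := fun J =>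
    isOpen_biInter_finset fun j _ => hbase.isOpen ⟨j, rfl⟩
  have hR : ∀ J : Finset ℕ, J.Nonempty → _ := fun J hJ =>
    tendstoUniformlyOn_Rmeasure_of_tendsto_iSup hPmeas hQmeas (hτ_inter J).measurableSet
      (hequi J hJ z a) (hz.prodMk_nhds ha)
  have hTV := tendstoUniformlyOn_RprimeM_of_biInter hPmeas hQmeas
    (fun i => (hbase.isOpen ⟨i, rfl⟩).measurableSet) (by rw [← sUnion_range, hbase.sUnion_eq]) hR
  obtain ⟨φ, hφ, hae⟩ := exists_strictMono_ae_tendsto_of_disint hPmeas hQmeas hH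
    (ι := {J : Finset ℕ // J.Nonempty}) (fun J => (hτ_inter J.1).measurableSet)
    (fun J w b => (ProbabilityMeasure.measurable_apply_of_isOpen (hτ_inter J.1)).comp
      (hHmeas.comp (measurable_const.prodMk (measurable_const.prodMk measurable_id))))
    hTV fun J => hR J.1 J.2
  have _ := isProbabilityMeasure_RprimeM (z := z) (a := a) hPmeas hQmeas
  obtain ⟨Cstar, hCm, hC1, hCconv⟩ := exists_measurableSet_measure_eq_one_of_ae hae
  exact ⟨φ, hφ, Cstar, hCm, hC1, fun y hy =>
    ProbabilityMeasure.tendsto_of_tendsto_measureReal_biInter hbase fun J hJ =>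
      hCconv y hy ⟨J, hJ⟩⟩

/-- **Lemma (countable base criterion for Assumption (H)).**
Suppose the topology of `X` has a countable base `τ_b` such that for each nonempty finite
intersection `O` of elements of `τ_b` the family `{(z,a) ↦ R(O×C|z,a) : C Borel in Y}`
is equicontinuous at every point `(z,a) ∈ P(X)×A`. Then for every stochastic kernel `H`
satisfying the disintegration identity (3.4) and every sequence `(z⁽ⁿ⁾,a⁽ⁿ⁾)` with
`z⁽ⁿ⁾ → z` weakly and `a⁽ⁿ⁾ → a`, there exist a subsequence and a Borel set `C* ⊆ Y`
with `R'(C*|z,a) = 1` on which `H(·|z⁽ⁿᵏ⁾,a⁽ⁿᵏ⁾,y) → H(·|z,a,y)` weakly. -/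
theorem assumptionH_of_countable_base {X Y A : Type*}
    [MetricSpace X] [SecondCountableTopology X] [MeasurableSpace X] [BorelSpace X]
    [MetricSpace Y] [SecondCountableTopology Y] [MeasurableSpace Y] [BorelSpace Y]
    [MetricSpace A] [SecondCountableTopology A] [MeasurableSpace A] [BorelSpace A]
    (P : X × A → ProbabilityMeasure X) (Q : A × X → ProbabilityMeasure Y)
    (hPmeas : Measurable fun p => (P p : Measure X))
    (hQmeas : Measurable fun p => (Q p : Measure Y))
    (τb : ℕ → Set X) (hbase : TopologicalSpace.IsTopologicalBasis (Set.range τb))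
    (hequi : ∀ J : Finset ℕ, J.Nonempty → ∀ (z : ProbabilityMeasure X) (a : A),
      Tendsto (fun p : ProbabilityMeasure X × A =>
          ⨆ C : {C : Set Y // MeasurableSet C},
            |(Rfun P Q p.1 p.2 (⋂ j ∈ J, τb j) C.1).toReal -
              (Rfun P Q z a (⋂ j ∈ J, τb j) C.1).toReal|)
        (𝓝 (z, a)) (𝓝 0))
    (H : ProbabilityMeasure X × A × Y → ProbabilityMeasure X)
    (hHmeas : Measurable H)
    (hH : Disint P Q H)
    (zs : ℕ → ProbabilityMeasure X) (z : ProbabilityMeasure X) (as : ℕ → A) (a : A)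
    (hz : Tendsto zs atTop (𝓝 z)) (ha : Tendsto as atTop (𝓝 a)) :
    ∃ φ : ℕ → ℕ, StrictMono φ ∧ ∃ Cstar : Set Y, MeasurableSet Cstar ∧
      RprimeM P Q z a Cstar = 1 ∧
      ∀ y ∈ Cstar,
        Tendsto (fun k => H (zs (φ k), as (φ k), y)) atTop (𝓝 (H (z, a, y))) :=
  assumptionH_of_countable_base_general P Q hPmeas hQmeas τb hbase hequi H hHmeas hH zs z as a hz ha
end

section
/- Suppose the stochastic kernel P(dx′|x,a) on X given X×A and the stochastic kernel Q(dy|a,x) on Y given A×X are weakly continuous, and H is a stochastic kernel on X given P(X)×A×Y satisfying the disintegration identity (3.4) that is weakly continuous, i.e. the map (z,a,y) ↦ H(·|z,a,y) from P(X)×A×Y to P(X) is continuous. Then the stochastic kernel q on P(X) given P(X)×A, defined by q(D|z,a) = ∫_Y 1{H(z,a,y) ∈ D} R′(dy|z,a) for Borel D ⊆ P(X), is weakly continuous. -/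
open MeasureTheory Filter Topology
open scoped ENNReal NNReal

/-- The transition kernel `q(D|z,a) = ∫_Y 1{H(z,a,y) ∈ D} R'(dy|z,a)` of the COMDP. -/
noncomputable def qker {X Y A : Type*}
    [MeasurableSpace X] [TopologicalSpace X] [OpensMeasurableSpace X] [MeasurableSpace Y]
    (P : X × A → ProbabilityMeasure X) (Q : A × X → ProbabilityMeasure Y)
    (H : ProbabilityMeasure X × A × Y → ProbabilityMeasure X)
    (z : ProbabilityMeasure X) (a : A) : Measure (ProbabilityMeasure X) :=
  (RprimeM P Q z a).map fun y => H (z, a, y)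

/-!
If `wₙ → w` and `μₙ → μ` weakly, then `δ_{wₙ} ⊗ μₙ → δ_w ⊗ μ` weakly, so
`∫ g(wₙ, ·) dμₙ → ∫ g(w, ·) dμ` for every bounded continuous `g`. Applied to
`g(w, x) = ∫ f dκ(w, x)`, this makes `μ.bind κ(w, ·)` jointly weakly continuous in `(μ, w)`
whenever the kernel `κ` is jointly weakly continuous. Now `R'(z, a)` arises from `z` by binding
along `P(·, a)` and then along `Q(a, ·)`, and `q(z, a)` arises from `R'(z, a)` by binding along the
Dirac kernel `y ↦ δ_{H(z, a, y)}`, which is jointly continuous because `H` is.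
-/

open TopologicalSpace BoundedContinuousFunction

namespace MeasureTheory.ProbabilityMeasure

section

variable {Ω : Type*} [MeasurableSpace Ω] [TopologicalSpace Ω]

lemma testAgainstNN_le_nndist_zero (μ : ProbabilityMeasure Ω) (f : Ω →ᵇ ℝ≥0) :
    μ.toFiniteMeasure.testAgainstNN f ≤ nndist f 0 :=
  (μ.toFiniteMeasure.testAgainstNN_mono (g := const Ω (nndist f 0))
    (NNReal.upper_bound f)).trans_eq
    (by rw [FiniteMeasure.testAgainstNN_const, mass_toFiniteMeasure, mul_one])

lemma lowerSemicontinuous_toMeasure_apply [OpensMeasurableSpace Ω] [HasOuterApproxClosed Ω]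
    {G : Set Ω} (hG : IsOpen G) :
    LowerSemicontinuous fun μ : ProbabilityMeasure Ω => (μ : Measure Ω) G :=
  lowerSemicontinuous_iff_le_liminf.mpr fun _ => le_liminf_measure_open_of_tendsto tendsto_id hG

end

theorem _root_.Continuous.measurable_toMeasure {S Ω : Type*} [TopologicalSpace S]
    [MeasurableSpace S] [OpensMeasurableSpace S] [MeasurableSpace Ω] [TopologicalSpace Ω]
    [BorelSpace Ω] [HasOuterApproxClosed Ω] {κ : S → ProbabilityMeasure Ω} (hκ : Continuous κ) :
    Measurable fun s => (κ s : Measure Ω) :=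
  .measure_of_isPiSystem_of_isProbabilityMeasure BorelSpace.measurable_eq isPiSystem_isOpen
    fun _ hG => ((lowerSemicontinuous_toMeasure_apply hG).comp hκ).measurable

theorem tendsto_lintegral_prodMk_of_tendsto {W Y : Type*} [TopologicalSpace W]
    [PseudoMetrizableSpace W] [TopologicalSpace Y] [PseudoMetrizableSpace Y]
    [SecondCountableTopology Y] [MeasurableSpace Y] [OpensMeasurableSpace Y]
    {ws : ℕ → W} {w : W} (hw : Tendsto ws atTop (𝓝 w))
    {μs : ℕ → ProbabilityMeasure Y} {μ : ProbabilityMeasure Y} (hμ : Tendsto μs atTop (𝓝 μ))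
    (g : W × Y →ᵇ ℝ≥0) :
    Tendsto (fun n => ∫⁻ y, g (ws n, y) ∂μs n) atTop (𝓝 (∫⁻ y, g (w, y) ∂μ)) := by
  -- Continuity of products of probability measures needs second countable factors, so we pass
  -- to the countable subspace formed by the sequence and its limit.
  set K : Set W := insert w (Set.range ws)
  have : Countable K := ((Set.countable_range ws).insert w).to_subtype
  let : MeasurableSpace K := borel K
  have : BorelSpace K := ⟨rfl⟩
  let ks : ℕ → K := fun n => ⟨ws n, Or.inr ⟨n, rfl⟩⟩
  let k : K := ⟨w, Or.inl rfl⟩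
  have hks : Tendsto ks atTop (𝓝 k) := tendsto_subtype_rng.mpr hw
  have hprod : Tendsto (fun n => (diracProba (ks n)).prod (μs n)) atTop
      (𝓝 ((diracProba k).prod μ)) :=
    (continuous_prod.tendsto _).comp
      (((continuous_diracProba.tendsto k).comp hks).prodMk_nhds hμ)
  let gK : K × Y →ᵇ ℝ≥0 := g.compContinuous ⟨fun p => (p.1, p.2), by fun_prop⟩
  have hgK : ∀ (k : K) (ν : ProbabilityMeasure Y),
      ∫⁻ p, gK p ∂((diracProba k).prod ν) = ∫⁻ y, g (k, y) ∂ν := by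
    intro k ν
    change ∫⁻ p, gK p ∂((Measure.dirac k).prod (ν : Measure Y)) = _
    rw [Measure.dirac_prod, lintegral_map (by fun_prop) measurable_prodMk_left]
    rfl
  simpa only [hgK] using tendsto_iff_forall_lintegral_tendsto.mp hprod gK

section bind

variable {S T : Type*} [TopologicalSpace S] [MeasurableSpace S] [OpensMeasurableSpace S]
  [TopologicalSpace T] [MeasurableSpace T] [BorelSpace T] [HasOuterApproxClosed T]

noncomputable def bind (μ : ProbabilityMeasure S) (κ : C(S, ProbabilityMeasure T)) :
    ProbabilityMeasure T :=
  ⟨(μ : Measure S).bind fun x => κ x, isProbabilityMeasure_bind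
    κ.continuous.measurable_toMeasure.aemeasurable (ae_of_all _ fun _ => inferInstance)⟩

lemma lintegral_bind (μ : ProbabilityMeasure S) (κ : C(S, ProbabilityMeasure T)) {f : T → ℝ≥0∞}
    (hf : Measurable f) : ∫⁻ t, f t ∂(μ.bind κ) = ∫⁻ x, ∫⁻ t, f t ∂(κ x) ∂μ :=
  Measure.lintegral_bind κ.continuous.measurable_toMeasure.aemeasurable hf.aemeasurable

theorem tendsto_bind {W : Type*} [TopologicalSpace W] [PseudoMetrizableSpace W]
    [PseudoMetrizableSpace S] [SecondCountableTopology S] (κ : C(W × S, ProbabilityMeasure T))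
    {ws : ℕ → W} {w : W} (hw : Tendsto ws atTop (𝓝 w))
    {μs : ℕ → ProbabilityMeasure S} {μ : ProbabilityMeasure S} (hμ : Tendsto μs atTop (𝓝 μ)) :
    Tendsto (fun n => (μs n).bind (κ.curry (ws n))) atTop (𝓝 (μ.bind (κ.curry w))) := by
  refine tendsto_iff_forall_lintegral_tendsto.mpr fun f => ?_
  have hbound : ∀ p, ((κ p).toFiniteMeasure.testAgainstNN f : ℝ) ∈ Set.Icc 0 (nndist f 0 : ℝ) :=
    fun p => ⟨NNReal.coe_nonneg _, NNReal.coe_le_coe.mpr (testAgainstNN_le_nndist_zero _ f)⟩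
  let g : W × S →ᵇ ℝ≥0 := .mkOfBound
    ⟨fun p => (κ p).toFiniteMeasure.testAgainstNN f,
      (continuous_testAgainstNN_eval f).comp κ.continuous⟩ (nndist f 0)
    fun p q => (Real.dist_le_of_mem_Icc (hbound p) (hbound q)).trans_eq (sub_zero _)
  have hg : ∀ (w : W) (ν : ProbabilityMeasure S),
      ∫⁻ t, f t ∂(ν.bind (κ.curry w)) = ∫⁻ x, g (w, x) ∂ν := fun w ν => by
    rw [lintegral_bind _ _ (by fun_prop)]
    exact lintegral_congr fun x =>
      (FiniteMeasure.testAgainstNN_coe_eq (μ := (κ (w, x)).toFiniteMeasure)).symm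
  simpa only [hg] using tendsto_lintegral_prodMk_of_tendsto hw hμ g

end bind

end MeasureTheory.ProbabilityMeasure

theorem qker_weakly_continuous_of_weaklyContinuous_H_general {X Y A : Type*}
    [MetricSpace X] [SecondCountableTopology X] [MeasurableSpace X] [BorelSpace X]
    [MetricSpace Y] [SecondCountableTopology Y] [MeasurableSpace Y] [BorelSpace Y]
    [MetricSpace A] [SecondCountableTopology A] [MeasurableSpace A] [BorelSpace A]
    (P : X × A → ProbabilityMeasure X) (Q : A × X → ProbabilityMeasure Y)
    (hPcont : Continuous P) (hQcont : Continuous Q)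
    (H : ProbabilityMeasure X × A × Y → ProbabilityMeasure X)
    (hHcont : Continuous H) :
    ∀ (zs : ℕ → ProbabilityMeasure X) (z : ProbabilityMeasure X) (as : ℕ → A) (a : A),
      Tendsto zs atTop (𝓝 z) → Tendsto as atTop (𝓝 a) →
      ∀ f : BoundedContinuousFunction (ProbabilityMeasure X) ℝ,
        Tendsto (fun n => ∫ ζ, f ζ ∂(qker P Q H (zs n) (as n))) atTop
          (𝓝 (∫ ζ, f ζ ∂(qker P Q H z a))) := by
  intro zs z as a hz ha f
  have : BorelSpace (ProbabilityMeasure X) := ⟨rfl⟩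
  let P' : C(A × X, ProbabilityMeasure X) := ⟨fun p => P (p.2, p.1), by fun_prop⟩
  let Q' : C(A × X, ProbabilityMeasure Y) := ⟨Q, hQcont⟩
  let H' : C((ProbabilityMeasure X × A) × Y, ProbabilityMeasure (ProbabilityMeasure X)) :=
    ⟨fun p => diracProba (H (p.1.1, p.1.2, p.2)), continuous_diracProba.comp (by fun_prop)⟩
  let R' (z : ProbabilityMeasure X) (a : A) : ProbabilityMeasure Y :=
    (z.bind (P'.curry a)).bind (Q'.curry a)
  have hR' : Tendsto (fun n => R' (zs n) (as n)) atTop (𝓝 (R' z a)) :=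
    ProbabilityMeasure.tendsto_bind Q' ha (ProbabilityMeasure.tendsto_bind P' ha hz)
  have hq : ∀ z a, qker P Q H z a = (R' z a).bind (H'.curry (z, a)) := fun z a =>
    (Measure.bind_dirac_eq_map _ (by fun_prop)).symm
  simp only [hq]
  exact ProbabilityMeasure.tendsto_iff_forall_integral_tendsto.mp
    (ProbabilityMeasure.tendsto_bind H' (hz.prodMk_nhds ha) hR') f

/-- **Theorem (weak continuity of `q` from weak continuity of `P`, `Q`, and `H`).**
If the kernels `P` and `Q` are weakly continuous and there is a weakly continuous
stochastic kernel `H` satisfying the disintegration identity (3.4), then the transition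
kernel `q` of the COMDP is weakly continuous. -/
theorem qker_weakly_continuous_of_weaklyContinuous_H {X Y A : Type*}
    [MetricSpace X] [SecondCountableTopology X] [MeasurableSpace X] [BorelSpace X]
    [MetricSpace Y] [SecondCountableTopology Y] [MeasurableSpace Y] [BorelSpace Y]
    [MetricSpace A] [SecondCountableTopology A] [MeasurableSpace A] [BorelSpace A]
    (P : X × A → ProbabilityMeasure X) (Q : A × X → ProbabilityMeasure Y)
    (hPmeas : Measurable fun p => (P p : Measure X))
    (hQmeas : Measurable fun p => (Q p : Measure Y))
    (hPcont : Continuous P) (hQcont : Continuous Q)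
    (H : ProbabilityMeasure X × A × Y → ProbabilityMeasure X)
    (hHmeas : Measurable H)
    (hHdis : Disint P Q H)
    (hHcont : Continuous H) :
    ∀ (zs : ℕ → ProbabilityMeasure X) (z : ProbabilityMeasure X) (as : ℕ → A) (a : A),
      Tendsto zs atTop (𝓝 z) → Tendsto as atTop (𝓝 a) →
      ∀ f : BoundedContinuousFunction (ProbabilityMeasure X) ℝ,
        Tendsto (fun n => ∫ ζ, f ζ ∂(qker P Q H (zs n) (as n))) atTop
          (𝓝 (∫ ζ, f ζ ∂(qker P Q H z a))) :=
  qker_weakly_continuous_of_weaklyContinuous_H_general P Q hPcont hQcont H hHcont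
end

section
/- If the function c : X×A → ℝ ∪ {+∞} is bounded from below by a constant K and K-inf-compact on X×A, then the function c̄ : P(X)×A → ℝ ∪ {+∞}, defined by c̄(z,a) = ∫_X c(x,a) z(dx), is bounded from below by the same constant K and is K-inf-compact on P(X)×A. -/
open MeasureTheory Filter Topology
open scoped ENNReal NNReal

/-- The nonnegative part of an extended real number, as an element of `[0,∞]`. -/
noncomputable def erealPart (x : EReal) : ℝ≥0∞ :=
  if x = ⊤ then ⊤ else ENNReal.ofReal x.toReal

/-- The Lebesgue integral of an `ℝ ∪ {±∞}`-valued function `f`, defined as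
`∫ f⁺ − ∫ f⁻` (the standard definition; for functions bounded below by a real constant
the negative part is integrable, so this is the usual integral with values in `ℝ ∪ {+∞}`). -/
noncomputable def eIntegral {S : Type*} [MeasurableSpace S] (μ : Measure S)
    (f : S → EReal) : EReal :=
  ((∫⁻ s, erealPart (f s) ∂μ : ℝ≥0∞) : EReal) - ((∫⁻ s, erealPart (-f s) ∂μ : ℝ≥0∞) : EReal)

/-- The one-step cost `c̄(z,a) = ∫_X c(x,a) z(dx)` of the COMDP. -/
noncomputable def cbar {X A : Type*} [MeasurableSpace X]
    (c : X × A → EReal) (z : ProbabilityMeasure X) (a : A) : EReal :=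
  eIntegral (z : Measure X) fun x => c (x, a)

/-- A function `f : X × A → ℝ ∪ {+∞}` is `K`-inf-compact if for every compact `K ⊆ X`
its restriction to `K × A` is inf-compact, i.e. all level sets are compact. -/
def KInfCompact {X A : Type*} [TopologicalSpace X] [TopologicalSpace A]
    (f : X × A → EReal) : Prop :=
  ∀ K : Set X, IsCompact K → ∀ lam : ℝ,
    IsCompact {p : X × A | p.1 ∈ K ∧ f p ≤ (lam : EReal)}

/-!
Write `c = K + g` with `g = (c - K)⁺ : X × A → [0, ∞]`, so that `c̄(z, a) = K + ∫ g(·, a) dz` and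
the level sets of `g` over compact sets are compact. Given `(zₙ, aₙ)` in a level set
`{∫ g(·, a) dz ≤ λ}` over a compact set of measures, pass to `zₙ → z`. The key tool is a Fatou
lemma for weakly converging measures with varying integrands (from the portmanteau theorem and
the layer-cake formula): `∫ f dz ≤ liminf ∫ fₙ dzₙ` whenever every `t < f x` is eventually below
`fₙ` near `x`. If `(aₙ)` had no cluster point, compactness of the level sets of `g` would force
`g(y, aₙ)` to be eventually above every `t` near every `x`, and Fatou would give
`∞ ≤ λ`. So some subsequence has `aₙ → a`, and Fatou with `f = g(·, a)` puts `(z, a)` in the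
level set.
-/

open Set

namespace EReal

lemma toENNReal_add_ofReal_neg {x : EReal} {K : ℝ} (hx : (K : EReal) ≤ x) :
    x.toENNReal + ENNReal.ofReal (-K)
      = (x - K).toENNReal + ENNReal.ofReal K + (-x).toENNReal := by
  induction x using EReal.rec with
  | bot => simp at hx
  | top => simp
  | coe x =>
    have hKx : K ≤ x := by exact_mod_cast hx
    rw [← EReal.coe_sub, ← EReal.coe_neg]
    simp only [real_coe_toENNReal]
    rw [← ENNReal.toReal_eq_toReal_iff' (by finiteness) (by finiteness)]
    simp only [ENNReal.toReal_add, ENNReal.ofReal_ne_top, ne_eq, not_false_eq_true,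
      ENNReal.add_ne_top, and_self, ENNReal.toReal_ofReal', max_eq_left (_root_.sub_nonneg.2 hKx)]
    rcases le_total 0 x with hx0 | hx0 <;> rcases le_total 0 K with hK0 | hK0 <;>
      simp only [max_eq_left, max_eq_right, hx0, hK0, neg_nonpos, neg_nonneg] <;>
      linarith

lemma toENNReal_sub_coe_le_coe_iff {x : EReal} {K : ℝ} {t : ℝ≥0} :
    (x - K).toENNReal ≤ t ↔ x ≤ ((K + t : ℝ) : EReal) := by
  induction x using EReal.rec with
  | bot => simp
  | top => simpa using (EReal.coe_lt_top (K + t)).ne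
  | coe x =>
    rw [← EReal.coe_sub, real_coe_toENNReal, ← ENNReal.ofReal_coe_nnreal,
      ENNReal.ofReal_le_ofReal_iff t.coe_nonneg, EReal.coe_le_coe_iff, sub_le_iff_le_add']

lemma coe_add_coe_ennreal_le_coe_iff {K lam : ℝ} (hK : K ≤ lam) {I : ℝ≥0∞} :
    (K : EReal) + I ≤ lam ↔ I ≤ ENNReal.ofReal (lam - K) := by
  rcases eq_or_ne I ⊤ with rfl | hI
  · simp
  · rw [← EReal.coe_ennreal_toReal hI, ← EReal.coe_add, EReal.coe_le_coe_iff,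
      ENNReal.le_ofReal_iff_toReal_le hI (_root_.sub_nonneg.2 hK), le_sub_iff_add_le']

end EReal

lemma eIntegral_eq_coe_add_lintegral {S : Type*} [MeasurableSpace S] (μ : Measure S)
    [IsProbabilityMeasure μ] {f : S → EReal} (hf : Measurable f) {K : ℝ}
    (hK : ∀ s, (K : EReal) ≤ f s) :
    eIntegral μ f = K + ∫⁻ s, (f s - K).toENNReal ∂μ := by
  set P := ∫⁻ s, (f s).toENNReal ∂μ
  set N := ∫⁻ s, (-f s).toENNReal ∂μ
  set I := ∫⁻ s, (f s - K).toENNReal ∂μ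
  have hN : N ≠ ⊤ := by
    refine ne_top_of_le_ne_top ENNReal.ofReal_ne_top (b := ENNReal.ofReal (-K)) ?_
    calc N ≤ ∫⁻ _, ENNReal.ofReal (-K) ∂μ :=
          lintegral_mono fun s => EReal.toENNReal_le_toENNReal (EReal.neg_le_neg_iff.2 (hK s))
      _ = ENNReal.ofReal (-K) := by simp
  have hsum : P + ENNReal.ofReal (-K) = I + ENNReal.ofReal K + N := by
    have hneg : Measurable fun s => (-f s).toENNReal := measurable_ereal_toENNReal.comp hf.neg
    calc P + ENNReal.ofReal (-K) = ∫⁻ s, (f s).toENNReal + ENNReal.ofReal (-K) ∂μ := by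
          rw [lintegral_add_right _ measurable_const]; simp [P]
      _ = ∫⁻ s, (f s - K).toENNReal + ENNReal.ofReal K + (-f s).toENNReal ∂μ :=
          lintegral_congr fun s => EReal.toENNReal_add_ofReal_neg (hK s)
      _ = I + ENNReal.ofReal K + N := by
          rw [lintegral_add_right _ hneg, lintegral_add_right _ measurable_const]; simp [I, N]
  have hP : (P : EReal) = I + K + N := by
    have h := congrArg ((↑) : ℝ≥0∞ → EReal) hsum
    have hmax : max K 0 = K + max (-K) 0 := by rcases le_total 0 K with hK0 | hK0 <;> simp [hK0]
    simp only [EReal.coe_ennreal_add, EReal.coe_ennreal_ofReal, hmax, EReal.coe_add] at h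
    rw [← EReal.add_sub_cancel_right (a := (P : EReal)) (b := max (-K) 0), h,
      show (I : EReal) + (K + (max (-K) 0 : ℝ)) + N = I + K + N + (max (-K) 0 : ℝ) by ac_rfl,
      EReal.add_sub_cancel_right]
  -- `erealPart` is definitionally `EReal.toENNReal`
  show (P : EReal) - N = K + I
  rw [hP, ← EReal.coe_ennreal_toReal hN, EReal.add_sub_cancel_right, add_comm]

lemma MapClusterPt.eq_of_tendsto {X ι : Type*} [TopologicalSpace X] [T2Space X] {F : Filter ι}
    {u : ι → X} {a b : X} (ha : MapClusterPt a F u) (hb : Tendsto u F (𝓝 b)) : a = b :=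
  not_not.1 fun hne => clusterPt_iff_not_disjoint.1 ha ((disjoint_nhds_nhds.2 hne).mono_right hb)

lemma exists_mapClusterPt_of_frequently_mem {X A ι : Type*} [TopologicalSpace X]
    [FirstCountableTopology X] [T2Space X] [TopologicalSpace A] {l : Filter ι}
    [l.IsCountablyGenerated] {S : Set (X × A)}
    (hS : ∀ C, IsCompact C → IsCompact {p | p.1 ∈ C ∧ p ∈ S}) {b : ι → A} {x : X}
    (h : ∃ᶠ q in l ×ˢ 𝓝 x, (q.2, b q.1) ∈ S) : ∃ a, MapClusterPt a l b ∧ (x, a) ∈ S := by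
  obtain ⟨u, hu, huS⟩ := exists_seq_forall_of_frequently h
  have hy : Tendsto (fun n => (u n).2) atTop (𝓝 x) := tendsto_snd.comp hu
  obtain ⟨p, ⟨-, hpS⟩, hp⟩ := (hS _ hy.isCompact_insert_range).exists_mapClusterPt
    (f := atTop) (u := fun n => ((u n).2, b (u n).1))
    (tendsto_principal.2 (Eventually.of_forall fun n => ⟨mem_insert_of_mem _ ⟨n, rfl⟩, huS n⟩))
  have hpx : p.1 = x := (hp.tendsto_comp (continuous_fst.tendsto p)).eq_of_tendsto hy
  exact ⟨p.2, (hp.tendsto_comp (continuous_snd.tendsto p)).of_comp (tendsto_fst.comp hu),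
    hpx ▸ hpS⟩

theorem lintegral_eq_lintegral_meas_ofReal_lt {α : Type*} [MeasurableSpace α] (μ : Measure α)
    {f : α → ℝ≥0∞} (hf : AEMeasurable f μ) :
    ∫⁻ a, f a ∂μ = ∫⁻ t in Ioi 0, μ {a | ENNReal.ofReal t < f a} := by
  by_cases htop : μ {a | f a = ⊤} = 0
  · have hfin : ∀ᵐ a ∂μ, f a ≠ ⊤ := by simpa [ae_iff] using htop
    calc ∫⁻ a, f a ∂μ = ∫⁻ a, ENNReal.ofReal (f a).toReal ∂μ :=
          lintegral_congr_ae (hfin.mono fun a ha => (ENNReal.ofReal_toReal ha).symm)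
      _ = ∫⁻ t in Ioi 0, μ {a | t < (f a).toReal} :=
          lintegral_eq_lintegral_meas_lt μ (ae_of_all _ fun _ => ENNReal.toReal_nonneg)
            hf.ennreal_toReal
      _ = ∫⁻ t in Ioi 0, μ {a | ENNReal.ofReal t < f a} := by
          refine setLIntegral_congr_fun measurableSet_Ioi fun t ht => measure_congr ?_
          exact hfin.mono fun a ha =>
            propext (ENNReal.ofReal_lt_iff_lt_toReal ht.le ha).symm
  · rw [lintegral_eq_top_of_measure_eq_top_ne_zero hf htop, eq_comm, eq_top_iff]
    calc ⊤ = ∫⁻ t in Ioi (0 : ℝ), μ {a | f a = ⊤} := by simp [htop]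
      _ ≤ ∫⁻ t in Ioi 0, μ {a | ENNReal.ofReal t < f a} :=
          lintegral_mono fun t => measure_mono fun a (ha : f a = ⊤) =>
            show _ < f a from ha ▸ ENNReal.ofReal_lt_top

section Portmanteau

variable {Ω : Type*} [TopologicalSpace Ω] [MeasurableSpace Ω] [OpensMeasurableSpace Ω]
  [HasOuterApproxClosed Ω] {μ : ProbabilityMeasure Ω} {μs : ℕ → ProbabilityMeasure Ω}

lemma ProbabilityMeasure.le_liminf_measure_of_eventually_mem (hμ : Tendsto μs atTop (𝓝 μ))
    {s : Set Ω} {t : ℕ → Set Ω} (h : ∀ x ∈ s, ∀ᶠ q in atTop ×ˢ 𝓝 x, q.2 ∈ t q.1) :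
    (μ : Measure Ω) s ≤ atTop.liminf fun m => (μs m : Measure Ω) (t m) := by
  set W : ℕ → Set Ω := fun n => interior {y | ∀ m ≥ n, y ∈ t m}
  have hW : Monotone W := fun n n' hn => interior_mono fun y hy m hm => hy m (hn.trans hm)
  have hsW : s ⊆ ⋃ n, W n := by
    intro x hx
    obtain ⟨pa, hpa, pb, hpb, hp⟩ := eventually_prod_iff.1 (h x hx)
    obtain ⟨n, hn⟩ := eventually_atTop.1 hpa
    exact mem_iUnion.2 ⟨n, mem_interior_iff_mem_nhds.2
      (mem_of_superset hpb fun y hy m hm => hp (hn m hm) hy)⟩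
  calc (μ : Measure Ω) s ≤ (μ : Measure Ω) (⋃ n, W n) := measure_mono hsW
    _ = ⨆ n, (μ : Measure Ω) (W n) := hW.measure_iUnion
    _ ≤ atTop.liminf fun m => (μs m : Measure Ω) (t m) := by
      refine iSup_le fun n => (ProbabilityMeasure.le_liminf_measure_open_of_tendsto hμ
        isOpen_interior).trans (liminf_le_liminf ?_)
      exact eventually_atTop.2 ⟨n, fun m hm => measure_mono fun y hy => interior_subset hy m hm⟩

lemma ProbabilityMeasure.lintegral_le_liminf_lintegral_of_eventually_lt
    (hμ : Tendsto μs atTop (𝓝 μ)) {f : Ω → ℝ≥0∞} (hf : Measurable f) {fs : ℕ → Ω → ℝ≥0∞}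
    (hfs : ∀ m, Measurable (fs m)) (h : ∀ x, ∀ t < f x, ∀ᶠ q in atTop ×ˢ 𝓝 x, t < fs q.1 q.2) :
    ∫⁻ x, f x ∂(μ : Measure Ω) ≤ atTop.liminf fun m => ∫⁻ x, fs m x ∂(μs m : Measure Ω) := by
  simp_rw [lintegral_eq_lintegral_meas_ofReal_lt _ hf.aemeasurable,
    lintegral_eq_lintegral_meas_ofReal_lt _ (hfs _).aemeasurable]
  calc ∫⁻ t in Ioi 0, (μ : Measure Ω) {x | ENNReal.ofReal t < f x}
      ≤ ∫⁻ t in Ioi 0, atTop.liminf fun m => (μs m : Measure Ω) {x | ENNReal.ofReal t < fs m x} :=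
        lintegral_mono fun t => le_liminf_measure_of_eventually_mem hμ fun x hx => h x _ hx
    _ ≤ _ := lintegral_liminf_le fun m => Antitone.measurable fun s t hst =>
        measure_mono fun x hx => (ENNReal.ofReal_le_ofReal hst).trans_lt hx

end Portmanteau

section InfCompact

variable {X A : Type*} [TopologicalSpace X] [TopologicalSpace.MetrizableSpace X]
  [MeasurableSpace X] [OpensMeasurableSpace X] [TopologicalSpace A] {g : X × A → ℝ≥0∞}

lemma lintegral_le_liminf_lintegral_of_mapClusterPt (hg : ∀ a, Measurable fun x => g (x, a))
    (hgc : ∀ C : Set X, IsCompact C → ∀ t : ℝ≥0, IsCompact {p | p.1 ∈ C ∧ g p ≤ t})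
    {z : ProbabilityMeasure X} {zs : ℕ → ProbabilityMeasure X} (hz : Tendsto zs atTop (𝓝 z))
    {b : ℕ → A} {f : X → ℝ≥0∞}
    (hf : Measurable f) (hfb : ∀ x a, MapClusterPt a atTop b → f x ≤ g (x, a)) :
    ∫⁻ x, f x ∂(z : Measure X)
      ≤ atTop.liminf fun m => ∫⁻ x, g (x, b m) ∂(zs m : Measure X) := by
  refine ProbabilityMeasure.lintegral_le_liminf_lintegral_of_eventually_lt hz hf
    (fun m => hg (b m)) fun x t ht => ?_
  lift t to ℝ≥0 using ht.ne_top
  by_contra hfreq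
  obtain ⟨a, ha, hxa⟩ := exists_mapClusterPt_of_frequently_mem (S := {p | g p ≤ t})
    (fun C hC => hgc C hC t) (by simpa only [not_eventually, not_lt, mem_ofPred_eq] using hfreq)
  exact (ht.trans_le (hfb x a ha)).not_ge hxa

theorem isCompact_setOf_lintegral_le [TopologicalSpace.SeparableSpace X]
    [TopologicalSpace.MetrizableSpace A] (hg : ∀ a, Measurable fun x => g (x, a))
    (hgc : ∀ C : Set X, IsCompact C → ∀ t : ℝ≥0, IsCompact {p | p.1 ∈ C ∧ g p ≤ t})
    {𝒦 : Set (ProbabilityMeasure X)} (h𝒦 : IsCompact 𝒦) (M : ℝ≥0) :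
    IsCompact {q : ProbabilityMeasure X × A |
      q.1 ∈ 𝒦 ∧ ∫⁻ x, g (x, q.2) ∂(q.1 : Measure X) ≤ M} := by
  refine IsSeqCompact.isCompact fun p hp => ?_
  obtain ⟨z, hz𝒦, φ, hφ, hz⟩ := h𝒦.tendsto_subseq fun n => (hp n).1
  set b := fun n => (p (φ n)).2
  have hM : ∀ ψ : ℕ → ℕ,
      atTop.liminf (fun m => ∫⁻ x, g (x, b (ψ m)) ∂((p (φ (ψ m))).1 : Measure X)) ≤ M :=
    fun ψ => liminf_le_of_frequently_le' (Frequently.of_forall fun m => (hp _).2)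
  obtain ⟨a, ha⟩ : ∃ a, MapClusterPt a atTop b := by
    by_contra! hb
    have htop := lintegral_le_liminf_lintegral_of_mapClusterPt hg hgc hz (f := fun _ => ⊤)
      measurable_const fun x a ha => (hb a ha).elim
    simp only [lintegral_const, measure_univ, mul_one] at htop
    exact ENNReal.coe_ne_top (top_le_iff.1 (htop.trans (hM id)))
  obtain ⟨ψ, hψ, hba⟩ := ha.tendsto_subseq
  have hzψ := hz.comp hψ.tendsto_atTop
  have hint := lintegral_le_liminf_lintegral_of_mapClusterPt hg hgc hzψ (b := b ∘ ψ) (hg a)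
    fun x a' ha' => (ha'.eq_of_tendsto hba) ▸ le_rfl
  exact ⟨(z, a), ⟨hz𝒦, hint.trans (hM ψ)⟩, φ ∘ ψ, hφ.comp hψ, hzψ.prodMk_nhds hba⟩

end InfCompact

theorem cbar_KInfCompact_general {X A : Type*}
    [MetricSpace X] [SecondCountableTopology X] [MeasurableSpace X] [BorelSpace X]
    [MetricSpace A] [MeasurableSpace A]
    (c : X × A → EReal) (hcmeas : Measurable c)
    (K : ℝ) (hbdd : ∀ p, (K : EReal) ≤ c p)
    (hKinf : KInfCompact c) :
    (∀ (z : ProbabilityMeasure X) (a : A), (K : EReal) ≤ cbar c z a) ∧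
    KInfCompact (fun p : ProbabilityMeasure X × A => cbar c p.1 p.2) := by
  have hcbar : ∀ z a, cbar c z a = K + ∫⁻ x, (c (x, a) - K).toENNReal ∂(z : Measure X) :=
    fun z a => eIntegral_eq_coe_add_lintegral _ (hcmeas.comp measurable_prodMk_right)
      fun x => hbdd _
  have hK : ∀ z a, (K : EReal) ≤ cbar c z a := fun z a =>
    hcbar z a ▸ le_add_of_nonneg_right (EReal.coe_ennreal_nonneg _)
  refine ⟨hK, fun 𝒦 h𝒦 lam => ?_⟩
  rcases lt_or_ge lam K with hlam | hlam
  · convert isCompact_empty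
    exact eq_empty_of_forall_notMem fun q hq =>
      hlam.not_ge (EReal.coe_le_coe_iff.1 ((hK _ _).trans hq.2))
  · have hlevel : ∀ C : Set X, IsCompact C → ∀ t : ℝ≥0,
        IsCompact {p | p.1 ∈ C ∧ (c p - K).toENNReal ≤ t} := fun C hC t => by
      simpa only [EReal.toENNReal_sub_coe_le_coe_iff] using hKinf C hC (K + t)
    have hmeas : ∀ a, Measurable fun x => (c (x, a) - K).toENNReal := fun a =>
      (measurable_ereal_toENNReal.comp (hcmeas.sub_const _)).comp measurable_prodMk_right
    convert isCompact_setOf_lintegral_le hmeas hlevel h𝒦 (lam - K).toNNReal using 3 with q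
    simp only [hcbar, EReal.coe_add_coe_ennreal_le_coe_iff hlam]
    rfl

/-- **Theorem (preservation of `K`-inf-compactness).**
If `c : X×A → ℝ ∪ {+∞}` is bounded below by a constant `K` and `K`-inf-compact on `X×A`,
then `c̄(z,a) = ∫_X c(x,a) z(dx)` is bounded below by the same constant and
`K`-inf-compact on `P(X)×A`. -/
theorem cbar_KInfCompact {X A : Type*}
    [MetricSpace X] [SecondCountableTopology X] [MeasurableSpace X] [BorelSpace X]
    [MetricSpace A] [SecondCountableTopology A] [MeasurableSpace A] [BorelSpace A]
    (c : X × A → EReal) (hcmeas : Measurable c)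
    (K : ℝ) (hbdd : ∀ p, (K : EReal) ≤ c p)
    (hKinf : KInfCompact c) :
    (∀ (z : ProbabilityMeasure X) (a : A), (K : EReal) ≤ cbar c z a) ∧
    KInfCompact (fun p : ProbabilityMeasure X × A => cbar c p.1 p.2) :=
  cbar_KInfCompact_general c hcmeas K hbdd hKinf
end

section
/- If the function c : X×A → ℝ ∪ {+∞} is bounded from below and lower semi-continuous on X×A, then the function c̄ : P(X)×A → ℝ ∪ {+∞}, defined by c̄(z,a) = ∫_X c(x,a) z(dx), is bounded from below (by the same bound) and lower semi-continuous on P(X)×A, where P(X) carries the topology of weak convergence. -/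
open MeasureTheory Filter Topology
open scoped ENNReal NNReal

/-!
Write `c̄(z, a) = ∫ c d(z ⊗ δₐ)`. Since `(z, a) ↦ z ⊗ δₐ` is weakly continuous, it suffices that
`μ ↦ ∫ c dμ` is lower semicontinuous on `P(X × A)`. The positive part `c⁺` is lower semicontinuous,
hence the increasing limit of the bounded Lipschitz functions `x ↦ ⨅ y, min (c⁺ y) n + n d(x, y)`,
so `∫ c⁺ dμ` is a supremum of weakly continuous functions of `μ`. The negative part `c⁻` is upper
semicontinuous and bounded by `K⁻`, so `∫ c⁻ dμ = K⁻ - ∫ (K⁻ - c⁻) dμ` is upper semicontinuous.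
-/

open scoped BoundedContinuousFunction

section LipschitzEnvelope

variable {Ω : Type*} [PseudoEMetricSpace Ω]

noncomputable def lipschitzEnvelope (h : Ω → ℝ≥0∞) (n : ℕ) (x : Ω) : ℝ≥0∞ :=
  ⨅ y, (min (h y) n + n * edist x y)

variable (h : Ω → ℝ≥0∞)

lemma lipschitzEnvelope_le (n : ℕ) (x : Ω) : lipschitzEnvelope h n x ≤ min (h x) n := by
  simpa [lipschitzEnvelope] using iInf_le (fun y => min (h y) n + n * edist x y) x

lemma lipschitzEnvelope_le_add_edist (n : ℕ) (x x' : Ω) :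
    lipschitzEnvelope h n x ≤ lipschitzEnvelope h n x' + n * edist x x' := by
  rw [lipschitzEnvelope, lipschitzEnvelope, ENNReal.iInf_add]
  refine iInf_mono fun y => ?_
  calc min (h y) n + n * edist x y ≤ min (h y) n + n * (edist x' y + edist x x') := by
        gcongr; exact (edist_triangle x x' y).trans_eq (add_comm _ _)
    _ = min (h y) n + n * edist x' y + n * edist x x' := by ring

lemma continuous_lipschitzEnvelope (n : ℕ) : Continuous (lipschitzEnvelope h n) :=
  continuous_of_le_add_edist n (ENNReal.natCast_ne_top n)
    (lipschitzEnvelope_le_add_edist h n)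

lemma monotone_lipschitzEnvelope : Monotone (lipschitzEnvelope h) := by
  intro n m hnm x
  refine iInf_mono fun y => ?_
  have : (n : ℝ≥0∞) ≤ m := by exact_mod_cast hnm
  gcongr

lemma LowerSemicontinuous.iSup_lipschitzEnvelope {h : Ω → ℝ≥0∞} (hh : LowerSemicontinuous h)
    (x : Ω) : ⨆ n, lipschitzEnvelope h n x = h x := by
  refine le_antisymm (iSup_le fun n => (lipschitzEnvelope_le h n x).trans (min_le_left _ _)) ?_
  refine le_of_forall_lt_imp_le_of_dense fun r hr => ?_
  obtain ⟨δ, hδ, hball⟩ := Metric.nhds_basis_eball.eventually_iff.1 (hh x r hr)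
  have hrδ : r / δ ≠ ⊤ := ENNReal.div_ne_top hr.ne_top hδ.ne'
  obtain ⟨n, hn⟩ := ENNReal.exists_nat_gt (max_ne_top hr.ne_top hrδ)
  rw [max_lt_iff] at hn
  have hnδ : r ≤ n * δ := by
    rw [← ENNReal.div_le_iff_le_mul (.inl hδ.ne') (.inr (pos_of_gt hn.1).ne')]
    exact hn.2.le
  refine le_iSup_of_le n (le_iInf fun y => ?_)
  rcases lt_or_ge (edist y x) δ with hy | hy
  · exact (le_min (hball (Metric.mem_eball.2 hy)).le hn.1.le).trans le_self_add
  · rw [edist_comm] at hy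
    exact (hnδ.trans (by gcongr)).trans le_add_self

end LipschitzEnvelope

lemma BoundedContinuousFunction.exists_coe_ennreal_eq {Ω : Type*} [TopologicalSpace Ω]
    {f : Ω → ℝ≥0∞} (hf : Continuous f) {C : ℝ≥0} (hC : ∀ x, f x ≤ C) :
    ∃ g : Ω →ᵇ ℝ≥0, ∀ x, (g x : ℝ≥0∞) = f x := by
  have hf_top x : f x ≠ ⊤ := ne_top_of_le_ne_top ENNReal.coe_ne_top (hC x)
  have hg_le x : (f x).toNNReal ≤ C := by
    simpa using ENNReal.toNNReal_mono ENNReal.coe_ne_top (hC x)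
  refine ⟨.mkOfBound ⟨fun x => (f x).toNNReal,
    ENNReal.continuousOn_toNNReal.comp_continuous hf hf_top⟩ C fun x y => ?_,
    fun x => ENNReal.coe_toNNReal (hf_top x)⟩
  simp only [ContinuousMap.coe_mk, NNReal.dist_eq]
  exact abs_sub_le_of_nonneg_of_le (by positivity) (hg_le x) (by positivity) (hg_le y)

lemma LowerSemicontinuous.exists_boundedContinuousFunction_iSup_eq {Ω : Type*}
    [PseudoEMetricSpace Ω] {h : Ω → ℝ≥0∞} (hh : LowerSemicontinuous h) :
    ∃ g : ℕ → Ω →ᵇ ℝ≥0, Monotone (fun n x => (g n x : ℝ≥0∞)) ∧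
      ∀ x, ⨆ n, (g n x : ℝ≥0∞) = h x := by
  choose g hg using fun n : ℕ => BoundedContinuousFunction.exists_coe_ennreal_eq
    (continuous_lipschitzEnvelope h n) (C := n)
    fun x => by simpa using (lipschitzEnvelope_le h n x).trans (min_le_right _ _)
  refine ⟨g, ?_, ?_⟩ <;> simp_rw [hg]
  exacts [monotone_lipschitzEnvelope h, hh.iSup_lipschitzEnvelope]

theorem LowerSemicontinuous.coe_ennreal_sub {α : Type*} [TopologicalSpace α] {f g : α → ℝ≥0∞}
    (hf : LowerSemicontinuous f) (hg : UpperSemicontinuous g) (hg_top : ∀ x, g x ≠ ⊤) :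
    LowerSemicontinuous fun x => (f x : EReal) - g x := by
  simp_rw [sub_eq_add_neg]
  refine LowerSemicontinuous.add' ?_ ?_ fun x => EReal.continuousAt_add (.inr ?_) (.inl ?_)
  · exact continuous_coe_ennreal_ereal.comp_lowerSemicontinuous hf
      fun _ _ => EReal.coe_ennreal_le_coe_ennreal_iff.2
  · exact (continuous_neg.comp continuous_coe_ennreal_ereal).comp_upperSemicontinuous_antitone hg
      fun _ _ hab => EReal.neg_le_neg_iff.2 (EReal.coe_ennreal_le_coe_ennreal_iff.2 hab)
  · simpa using hg_top x
  · exact EReal.coe_ennreal_ne_bot _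

lemma EReal.coe_toENNReal_sub_coe_toENNReal_neg (x : EReal) :
    (x.toENNReal : EReal) - (-x).toENNReal = x := by
  induction x with
  | bot => simp
  | top => simp
  | coe r =>
    rcases le_total 0 r with hr | hr <;> simp [hr]

lemma erealPart_eq_toENNReal : erealPart = EReal.toENNReal := rfl

section eIntegral

variable {S : Type*} [MeasurableSpace S]

lemma eIntegral_mono {μ : Measure S} {f g : S → EReal} (hfg : f ≤ g) :
    eIntegral μ f ≤ eIntegral μ g := by
  simp only [eIntegral, erealPart_eq_toENNReal]
  refine EReal.sub_le_sub ?_ ?_ <;> refine EReal.coe_ennreal_le_coe_ennreal_iff.2 <|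
    lintegral_mono fun x => EReal.toENNReal_le_toENNReal ?_
  exacts [hfg x, EReal.neg_le_neg_iff.2 (hfg x)]

lemma eIntegral_const (μ : Measure S) [IsProbabilityMeasure μ] (x : EReal) :
    eIntegral μ (fun _ => x) = x := by
  simp [eIntegral, erealPart_eq_toENNReal, EReal.coe_toENNReal_sub_coe_toENNReal_neg]

end eIntegral

namespace MeasureTheory.ProbabilityMeasure

variable {Ω : Type*} [PseudoEMetricSpace Ω] [MeasurableSpace Ω] [OpensMeasurableSpace Ω]

theorem lowerSemicontinuous_lintegral {h : Ω → ℝ≥0∞} (hh : LowerSemicontinuous h) :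
    LowerSemicontinuous fun μ : ProbabilityMeasure Ω => ∫⁻ x, h x ∂μ := by
  obtain ⟨g, hg_mono, hg_sup⟩ := hh.exists_boundedContinuousFunction_iSup_eq
  have hg_meas n : Measurable fun x => (g n x : ℝ≥0∞) :=
    measurable_coe_nnreal_ennreal_iff.2 (g n).continuous.measurable
  simp_rw [← hg_sup, lintegral_iSup hg_meas hg_mono]
  exact lowerSemicontinuous_iSup fun n =>
    (continuous_lintegral_boundedContinuousFunction (g n)).lowerSemicontinuous

theorem upperSemicontinuous_lintegral {h : Ω → ℝ≥0∞} (hh : UpperSemicontinuous h) {C : ℝ≥0∞}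
    (hC : C ≠ ⊤) (hhC : ∀ x, h x ≤ C) :
    UpperSemicontinuous fun μ : ProbabilityMeasure Ω => ∫⁻ x, h x ∂μ := by
  have hsub : LowerSemicontinuous fun x => C - h x :=
    (ENNReal.continuous_sub_left hC).comp_upperSemicontinuous_antitone hh
      fun _ _ hab => tsub_le_tsub_left hab C
  have h_eq (μ : ProbabilityMeasure Ω) : ∫⁻ x, h x ∂μ = C - ∫⁻ x, C - h x ∂μ := by
    have h_le : ∫⁻ x, h x ∂μ ≤ C := lintegral_le_const (.of_forall hhC)
    rw [lintegral_sub' hh.measurable.aemeasurable ?_ (.of_forall hhC), lintegral_const,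
      measure_univ, mul_one, ENNReal.sub_sub_cancel hC h_le]
    exact (h_le.trans_lt hC.lt_top).ne
  simp_rw [h_eq]
  exact (ENNReal.continuous_sub_left hC).comp_lowerSemicontinuous_antitone
    (lowerSemicontinuous_lintegral hsub) fun _ _ hab => tsub_le_tsub_left hab C

theorem lowerSemicontinuous_eIntegral {f : Ω → EReal} (hf : LowerSemicontinuous f) {K : ℝ}
    (hK : ∀ x, (K : EReal) ≤ f x) :
    LowerSemicontinuous fun μ : ProbabilityMeasure Ω => eIntegral μ f := by
  have h_neg_le x : (-f x).toENNReal ≤ (-K : EReal).toENNReal :=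
    EReal.toENNReal_le_toENNReal (EReal.neg_le_neg_iff.2 (hK x))
  have h_top : (-K : EReal).toENNReal ≠ ⊤ := by simp
  simp only [eIntegral, erealPart_eq_toENNReal]
  refine (lowerSemicontinuous_lintegral ?_).coe_ennreal_sub
    (upperSemicontinuous_lintegral ?_ h_top h_neg_le) fun μ => ?_
  · exact EReal.continuous_toENNReal.comp_lowerSemicontinuous hf
      fun _ _ => EReal.toENNReal_le_toENNReal
  · exact (EReal.continuous_toENNReal.comp continuous_neg).comp_lowerSemicontinuous_antitone hf
      fun _ _ hab => EReal.toENNReal_le_toENNReal (EReal.neg_le_neg_iff.2 hab)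
  · exact ne_top_of_le_ne_top h_top (lintegral_le_const (.of_forall h_neg_le))

lemma lintegral_prod_diracProba {X A : Type*} [MeasurableSpace X] [MeasurableSpace A]
    (μ : ProbabilityMeasure X) (a : A) {f : X × A → ℝ≥0∞} (hf : Measurable f) :
    ∫⁻ p, f p ∂(μ.prod (diracProba a)) = ∫⁻ x, f (x, a) ∂μ := by
  rw [toMeasure_prod]
  simp [diracProba, Measure.prod_dirac, lintegral_map hf measurable_prodMk_right]

end MeasureTheory.ProbabilityMeasure

lemma cbar_eq_eIntegral_prod_diracProba {X A : Type*} [MeasurableSpace X] [MeasurableSpace A]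
    {c : X × A → EReal} (hc : Measurable c) (z : ProbabilityMeasure X) (a : A) :
    cbar c z a = eIntegral (z.prod (diracProba a)) c := by
  have h_meas : Measurable EReal.toENNReal := EReal.continuous_toENNReal.measurable
  simp only [cbar, eIntegral, erealPart_eq_toENNReal]
  rw [ProbabilityMeasure.lintegral_prod_diracProba z a (f := fun p => (c p).toENNReal)
      (h_meas.comp hc),
    ProbabilityMeasure.lintegral_prod_diracProba z a (f := fun p => (-c p).toENNReal)
      (h_meas.comp hc.neg)]

theorem cbar_lowerSemicontinuous_general {X A : Type*}
    [MetricSpace X] [SecondCountableTopology X] [MeasurableSpace X] [BorelSpace X]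
    [MetricSpace A] [SecondCountableTopology A] [MeasurableSpace A] [BorelSpace A]
    (c : X × A → EReal)
    (K : ℝ) (hbdd : ∀ p, (K : EReal) ≤ c p)
    (hlsc : LowerSemicontinuous c) :
    (∀ (z : ProbabilityMeasure X) (a : A), (K : EReal) ≤ cbar c z a) ∧
    LowerSemicontinuous (fun p : ProbabilityMeasure X × A => cbar c p.1 p.2) := by
  refine ⟨fun z a => ?_, ?_⟩
  · calc (K : EReal) = eIntegral (z : Measure X) fun _ => (K : EReal) :=
          (eIntegral_const _ _).symm
      _ ≤ eIntegral (z : Measure X) fun x => c (x, a) := eIntegral_mono fun x => hbdd (x, a)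
  · simp_rw [cbar_eq_eIntegral_prod_diracProba hlsc.measurable]
    exact (ProbabilityMeasure.lowerSemicontinuous_eIntegral hlsc hbdd).comp
      (ProbabilityMeasure.continuous_prod.comp
        (continuous_fst.prodMk (continuous_diracProba.comp continuous_snd)))

/-- **Lemma (preservation of lower semicontinuity).**
If `c : X×A → ℝ ∪ {+∞}` is bounded below and lower semicontinuous on `X×A`, then
`c̄(z,a) = ∫_X c(x,a) z(dx)` is bounded below by the same bound and lower semicontinuous
on `P(X)×A`, where `P(X)` carries the topology of weak convergence. -/
theorem cbar_lowerSemicontinuous {X A : Type*}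
    [MetricSpace X] [SecondCountableTopology X] [MeasurableSpace X] [BorelSpace X]
    [MetricSpace A] [SecondCountableTopology A] [MeasurableSpace A] [BorelSpace A]
    (c : X × A → EReal) (hcmeas : Measurable c)
    (K : ℝ) (hbdd : ∀ p, (K : EReal) ≤ c p)
    (hlsc : LowerSemicontinuous c) :
    (∀ (z : ProbabilityMeasure X) (a : A), (K : EReal) ≤ cbar c z a) ∧
    LowerSemicontinuous (fun p : ProbabilityMeasure X × A => cbar c p.1 p.2) :=
  cbar_lowerSemicontinuous_general c K hbdd hlsc
end

section
/- If the function c : X×A → ℝ ∪ {+∞} is bounded from below on X×A and, for each fixed x ∈ X, the function a ↦ c(x,a) is inf-compact on A, then the function c̄ : P(X)×A → ℝ ∪ {+∞}, defined by c̄(z,a) = ∫_X c(x,a) z(dx), is bounded from below on P(X)×A and, for each fixed z ∈ P(X), the function a ↦ c̄(z,a) is inf-compact on A. -/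
open MeasureTheory Filter Topology
open scoped ENNReal NNReal

/-!
Shifting by `K` makes the integrand `f x a = (c (x, a) - K)⁺` nonnegative, with
`c̄(z, a) = ∫⁻ f x a ∂z + K`; the sublevel sets of `f x` are those of `c (x, ·)`, hence compact.
Compact sublevel sets make each `f x` lower semicontinuous, and Fatou's lemma passes this on to
`a ↦ ∫⁻ f x a ∂z`, so its sublevel sets are closed. If `∫⁻ f x aₙ ∂z ≤ L < ∞` for all `n`, Fatou
gives `∫⁻ liminf f x aₙ ∂z ≤ L`, so `liminf f x aₙ < ∞` at some point `x`: infinitely many `aₙ`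
then lie in one compact sublevel set of `f x`, and a subsequence converges.
-/

namespace EReal

lemma toENNReal_le_coe_iff {y : EReal} {t : ℝ≥0∞} : y.toENNReal ≤ t ↔ y ≤ t :=
  ⟨fun h => le_max_right 0 y |>.trans <| coe_toENNReal_eq_max.symm.le.trans <|
      coe_ennreal_le_coe_ennreal_iff.2 h,
    fun h => (toENNReal_le_toENNReal h).trans_eq toENNReal_coe⟩

lemma toENNReal_sub_add_toENNReal_neg_add {y : EReal} {K : ℝ} (hy : (K : EReal) ≤ y) :
    (y - K).toENNReal + (-y).toENNReal + ENNReal.ofReal K =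
      y.toENNReal + ENNReal.ofReal (-K) := by
  induction y using EReal.rec with
  | bot => simp at hy
  | top => simp
  | coe r =>
    rw [← coe_sub, ← coe_neg, real_coe_toENNReal, real_coe_toENNReal, real_coe_toENNReal,
      ← ENNReal.toReal_eq_toReal_iff' (by simp) (by simp)]
    simp only [ENNReal.toReal_add, ENNReal.ofReal_ne_top, ne_eq, not_false_eq_true,
      ENNReal.add_ne_top, and_self, ENNReal.toReal_ofReal',
      max_eq_left (_root_.sub_nonneg.2 (EReal.coe_le_coe_iff.1 hy))]
    linarith [max_zero_sub_max_neg_zero_eq_self r, max_zero_sub_max_neg_zero_eq_self K]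

lemma toENNReal_sub_coe_le_iff {y : EReal} {K : ℝ} {t : ℝ≥0∞} (ht : t ≠ ∞) :
    (y - K).toENNReal ≤ t ↔ y ≤ (t.toReal + K : ℝ) := by
  rw [toENNReal_le_coe_iff, ← coe_ennreal_toReal ht,
    sub_le_iff_le_add (Or.inl (coe_ne_bot K)) (Or.inl (coe_ne_top K)), coe_add]

lemma coe_ennreal_add_coe_le_coe_iff {x : ℝ≥0∞} {K r : ℝ} (hK : K ≤ r) :
    (x : EReal) + K ≤ r ↔ x ≤ ENNReal.ofReal (r - K) := by
  rw [← le_sub_iff_add_le (Or.inl (coe_ne_bot K)) (Or.inl (coe_ne_top K)), ← coe_sub,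
    ← coe_ennreal_le_coe_ennreal_iff, coe_ennreal_ofReal, max_eq_left (_root_.sub_nonneg.2 hK)]

end EReal

lemma eIntegral_eq_lintegral_sub_add {S : Type*} [MeasurableSpace S] {μ : Measure S}
    [IsProbabilityMeasure μ] {f : S → EReal} (hf : Measurable f) {K : ℝ}
    (hK : ∀ s, (K : EReal) ≤ f s) :
    eIntegral μ f = ((∫⁻ s, (f s - K).toENNReal ∂μ : ℝ≥0∞) : EReal) + K := by
  set P := ∫⁻ s, (f s).toENNReal ∂μ
  set N := ∫⁻ s, (-f s).toENNReal ∂μ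
  set P' := ∫⁻ s, (f s - K).toENNReal ∂μ
  have hsum : P' + N + ENNReal.ofReal K = P + ENNReal.ofReal (-K) := by
    calc P' + N + ENNReal.ofReal K
        = ∫⁻ s, ((f s - K).toENNReal + (-f s).toENNReal + ENNReal.ofReal K) ∂μ := by
          rw [lintegral_add_right _ measurable_const, lintegral_add_left, lintegral_const,
            measure_univ, mul_one]
          exact (hf.sub_const _).ereal_toENNReal
      _ = ∫⁻ s, ((f s).toENNReal + ENNReal.ofReal (-K)) ∂μ :=
          lintegral_congr fun s => EReal.toENNReal_sub_add_toENNReal_neg_add (hK s)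
      _ = P + ENNReal.ofReal (-K) := by
          rw [lintegral_add_right _ measurable_const, lintegral_const, measure_univ, mul_one]
  have hN : N ≠ ∞ :=
    ((lintegral_mono fun s => EReal.toENNReal_le_toENNReal (EReal.neg_le_neg_iff.2 (hK s)))
      |>.trans_lt (by simp [← EReal.coe_neg])).ne
  have hsum_ereal : (P' : EReal) + N.toReal + (max K 0 : ℝ) = P + (max (-K) 0 : ℝ) := by
    simpa [EReal.coe_ennreal_toReal hN, EReal.coe_ennreal_ofReal] using
      congrArg ((↑) : ℝ≥0∞ → EReal) hsum
  -- `erealPart` is definitionally `EReal.toENNReal`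
  show (P : EReal) - N = P' + K
  calc (P : EReal) - N = P + (max (-K) 0 : ℝ) - (max (-K) 0 : ℝ) - N.toReal := by
        rw [EReal.add_sub_cancel_right, EReal.coe_ennreal_toReal hN]
    _ = P' + N.toReal + (max K 0 : ℝ) - (max (-K) 0 : ℝ) - N.toReal := by rw [hsum_ereal]
    _ = P' + K := by
        simp only [sub_eq_add_neg, ← EReal.coe_neg, add_assoc, ← EReal.coe_add]
        congr 2
        linarith [max_zero_sub_max_neg_zero_eq_self K]

section LintegralInfCompact

variable {X A : Type*} [MeasurableSpace X] [TopologicalSpace A] {μ : Measure X}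

lemma lowerSemicontinuous_of_isCompact_setOf_le [T2Space A] {g : A → ℝ≥0∞}
    (hg : ∀ t ≠ ∞, IsCompact {a | g a ≤ t}) : LowerSemicontinuous g := by
  refine lowerSemicontinuous_iff_isClosed_preimage.2 fun t => ?_
  rcases eq_or_ne t ∞ with rfl | ht
  · simp
  · exact (hg t ht).isClosed

lemma lowerSemicontinuous_lintegral [FirstCountableTopology A] {f : X → A → ℝ≥0∞}
    (hf : ∀ x, LowerSemicontinuous (f x)) (hmeas : ∀ a, Measurable fun x => f x a) :
    LowerSemicontinuous fun a => ∫⁻ x, f x a ∂μ :=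
  lowerSemicontinuous_iff_le_liminf.2 fun a =>
    (lintegral_mono fun x => (hf x).le_liminf a).trans (lintegral_liminf_le hmeas)

lemma ae_liminf_lt_top_of_lintegral_le {F : ℕ → X → ℝ≥0∞} (hF : ∀ n, Measurable (F n))
    {L : ℝ≥0∞} (hL : L ≠ ∞) (h : ∀ n, ∫⁻ x, F n x ∂μ ≤ L) :
    ∀ᵐ x ∂μ, liminf (fun n => F n x) atTop < ∞ :=
  ae_lt_top (Measurable.liminf hF) <| ne_top_of_le_ne_top hL <|
    (lintegral_liminf_le hF).trans <| liminf_le_of_frequently_le' (Frequently.of_forall h)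

lemma isCompact_setOf_lintegral_le_s13 [TopologicalSpace.MetrizableSpace A] [NeZero μ]
    {f : X → A → ℝ≥0∞} (hmeas : ∀ a, Measurable fun x => f x a)
    (hf : ∀ x, ∀ t ≠ ∞, IsCompact {a | f x a ≤ t})
    {L : ℝ≥0∞} (hL : L ≠ ∞) : IsCompact {a | ∫⁻ x, f x a ∂μ ≤ L} := by
  have hclosed : IsClosed {a | ∫⁻ x, f x a ∂μ ≤ L} :=
    (lowerSemicontinuous_lintegral
      (fun x => lowerSemicontinuous_of_isCompact_setOf_le (hf x)) hmeas).isClosed_preimage L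
  refine IsSeqCompact.isCompact fun u hu => ?_
  obtain ⟨x, hx⟩ := (ae_liminf_lt_top_of_lintegral_le (fun n => hmeas (u n)) hL hu).exists
  obtain ⟨t, hxt, ht⟩ := exists_between hx
  have hfreq : ∃ᶠ n in atTop, u n ∈ {a | f x a ≤ t} :=
    (frequently_lt_of_liminf_lt (by isBoundedDefault) hxt).mono fun _ => le_of_lt
  obtain ⟨b, -, φ, hφ, hub⟩ := (hf x t ht.ne).isSeqCompact.subseq_of_frequently_in hfreq
  exact ⟨b, hclosed.mem_of_tendsto hub (Eventually.of_forall fun n => hu (φ n)), φ, hφ, hub⟩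

end LintegralInfCompact

theorem cbar_infCompact_in_action_general {X A : Type*}
    [MeasurableSpace X]
    [MetricSpace A] [MeasurableSpace A]
    (c : X × A → EReal) (hcmeas : Measurable c)
    (K : ℝ) (hbdd : ∀ p, (K : EReal) ≤ c p)
    (hinf : ∀ x : X, ∀ lam : ℝ, IsCompact {a : A | c (x, a) ≤ (lam : EReal)}) :
    (∀ (z : ProbabilityMeasure X) (a : A), (K : EReal) ≤ cbar c z a) ∧
    ∀ z : ProbabilityMeasure X, ∀ lam : ℝ,
      IsCompact {a : A | cbar c z a ≤ (lam : EReal)} := by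
  have hsec (a : A) : Measurable fun x => c (x, a) := hcmeas.comp measurable_prodMk_right
  have hcbar (z : ProbabilityMeasure X) (a : A) :
      cbar c z a = ((∫⁻ x, (c (x, a) - K).toENNReal ∂(z : Measure X) : ℝ≥0∞) : EReal) + K :=
    eIntegral_eq_lintegral_sub_add (hsec a) fun x => hbdd (x, a)
  have hbound (z : ProbabilityMeasure X) (a : A) : (K : EReal) ≤ cbar c z a := by
    rw [hcbar]
    exact le_add_of_nonneg_left (EReal.coe_ennreal_nonneg _)
  refine ⟨hbound, fun z lam => ?_⟩
  rcases lt_or_ge lam K with hlam | hlam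
  · convert isCompact_empty
    exact Set.eq_empty_of_forall_notMem fun a ha =>
      (ha.trans_lt (EReal.coe_lt_coe_iff.2 hlam)).not_ge (hbound z a)
  have hsublevel : {a | cbar c z a ≤ lam} =
      {a | ∫⁻ x, (c (x, a) - K).toENNReal ∂(z : Measure X) ≤ ENNReal.ofReal (lam - K)} := by
    ext a
    rw [Set.mem_ofPred_eq, hcbar, EReal.coe_ennreal_add_coe_le_coe_iff hlam, Set.mem_ofPred_eq]
  rw [hsublevel]
  refine isCompact_setOf_lintegral_le_s13 (fun a => ((hsec a).sub_const _).ereal_toENNReal)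
    (fun x t ht => ?_) ENNReal.ofReal_ne_top
  simpa only [EReal.toENNReal_sub_coe_le_iff ht] using hinf x (t.toReal + K)

/-- **Theorem (preservation of inf-compactness in the action variable).**
If `c : X×A → ℝ ∪ {+∞}` is bounded below and, for each fixed `x ∈ X`, `a ↦ c(x,a)` is
inf-compact on `A`, then `c̄(z,a) = ∫_X c(x,a) z(dx)` is bounded below and, for each
fixed `z ∈ P(X)`, `a ↦ c̄(z,a)` is inf-compact on `A`. -/
theorem cbar_infCompact_in_action {X A : Type*}
    [MetricSpace X] [SecondCountableTopology X] [MeasurableSpace X] [BorelSpace X]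
    [MetricSpace A] [SecondCountableTopology A] [MeasurableSpace A] [BorelSpace A]
    (c : X × A → EReal) (hcmeas : Measurable c)
    (K : ℝ) (hbdd : ∀ p, (K : EReal) ≤ c p)
    (hinf : ∀ x : X, ∀ lam : ℝ, IsCompact {a : A | c (x, a) ≤ (lam : EReal)}) :
    (∀ (z : ProbabilityMeasure X) (a : A), (K : EReal) ≤ cbar c z a) ∧
    ∀ z : ProbabilityMeasure X, ∀ lam : ℝ,
      IsCompact {a : A | cbar c z a ≤ (lam : EReal)} :=
  cbar_infCompact_in_action_general c hcmeas K hbdd hinf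
end
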